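/- arXiv:2105.08890 — 10 statements merged into one kernel-verified Lean document; each statement's English description precedes it below -/
import Mathlib

section
/- Let D ⊆ V₀ and f : D → ℝ. For i = 1, 2 let Lᵢ be the horizontal line through pᵢ ∈ ℍ with direction (1, mᵢ, 0), parametrized by λᵢ(t) = pᵢ·((t − x(pᵢ))·(1, mᵢ, 0)) so that the x-coordinate of λᵢ(t) is t, let Iᵢ ⊆ ℝ be an interval, and suppose λᵢ(t) ∈ Γ_f for every t ∈ Iᵢ. Let gᵢ : ℝ → ℝ be the (quadratic) function such that Π(λᵢ(t)) = (t, 0, gᵢ(t)) for all t. If L₁ ≠ L₂, then either g₁(t) ≤ g₂(t) for all t ∈ I₁ ∩ I₂, or g₁(t) ≥ g₂(t) for all t ∈ I₁ ∩ I₂. -/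
/-!
If `g₁ - g₂` changed sign on the interval `I₁ ∩ I₂`, it would vanish at some `t₀` there. Points of an
intrinsic graph are determined by their projections, so the two rulings would meet at parameter `t₀`.
But for two horizontal lines meeting at parameter `t₀` the difference of the projected heights is
exactly `(m₂ - m₁) / 2 * (t - t₀) ^ 2`, which has constant sign.
-/

noncomputable section

/-- The Heisenberg group, identified with `ℝ³`. -/
abbrev H : Type := ℝ × ℝ × ℝ

/-- Heisenberg group multiplication. -/
def Hmul (p q : H) : H :=
  (p.1 + q.1, p.2.1 + q.2.1, p.2.2 + q.2.2 + (p.1 * q.2.1 - p.2.1 * q.1) / 2)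

/-- The intrinsic projection `Π : ℍ → V₀`. -/
def Proj (p : H) : H := (p.1, 0, p.2.2 - p.1 * p.2.1 / 2)

/-- The `xz`-plane `V₀`. -/
def V0 : Set H := {p : H | p.2.1 = 0}

/-- The intrinsic graph of `f` over `D ⊆ V₀`. -/
def IGraph (D : Set H) (f : H → ℝ) : Set H :=
  {q : H | ∃ x z : ℝ, ((x, (0 : ℝ), z) ∈ D) ∧
    q = (x, f (x, 0, z), z + x * f (x, 0, z) / 2)}

def horizLine (p : H) (m t : ℝ) : H := Hmul p ((t - p.1) * 1, (t - p.1) * m, 0)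

def horizLineHeight (p : H) (m t : ℝ) : ℝ := (Proj (horizLine p m t)).2.2

theorem proj_horizLine (p : H) (m t : ℝ) :
    Proj (horizLine p m t) = (t, 0, horizLineHeight p m t) := by
  simp only [horizLineHeight, Proj, horizLine, Hmul]
  ring_nf

theorem continuous_horizLineHeight (p : H) (m : ℝ) : Continuous (horizLineHeight p m) := by
  unfold horizLineHeight Proj horizLine Hmul
  fun_prop

theorem horizLineHeight_sub_of_eq {p₁ p₂ : H} {m₁ m₂ t₀ : ℝ}
    (h : horizLine p₁ m₁ t₀ = horizLine p₂ m₂ t₀) (t : ℝ) :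
    horizLineHeight p₁ m₁ t - horizLineHeight p₂ m₂ t = (m₂ - m₁) / 2 * (t - t₀) ^ 2 := by
  simp only [horizLine, Hmul, Prod.mk.injEq] at h
  obtain ⟨-, hy, hz⟩ := h
  simp only [horizLineHeight, Proj, horizLine, Hmul]
  linear_combination hz - (t - t₀ / 2) * hy

theorem proj_injOn_iGraph (D : Set H) (f : H → ℝ) : Set.InjOn Proj (IGraph D f) := by
  rintro _ ⟨x, z, -, rfl⟩ _ ⟨x', z', -, rfl⟩ h
  simp only [Proj, Prod.mk.injEq] at h
  obtain ⟨rfl, -, hz⟩ := h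
  obtain rfl : z = z' := by linarith
  rfl

theorem ordering_rulings_general
    (D : Set H) (f : H → ℝ)
    (p₁ p₂ : H) (m₁ m₂ : ℝ)
    (lam₁ lam₂ : ℝ → H)
    (hlam₁ : ∀ t : ℝ, lam₁ t = Hmul p₁ ((t - p₁.1) * 1, (t - p₁.1) * m₁, 0))
    (hlam₂ : ∀ t : ℝ, lam₂ t = Hmul p₂ ((t - p₂.1) * 1, (t - p₂.1) * m₂, 0))
    (I₁ I₂ : Set ℝ) (hI₁ : I₁.OrdConnected) (hI₂ : I₂.OrdConnected)
    (hmem₁ : ∀ t ∈ I₁, lam₁ t ∈ IGraph D f)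
    (hmem₂ : ∀ t ∈ I₂, lam₂ t ∈ IGraph D f)
    (g₁ g₂ : ℝ → ℝ)
    (hg₁ : ∀ t : ℝ, Proj (lam₁ t) = (t, 0, g₁ t))
    (hg₂ : ∀ t : ℝ, Proj (lam₂ t) = (t, 0, g₂ t)) :
    (∀ t ∈ I₁ ∩ I₂, g₁ t ≤ g₂ t) ∨ (∀ t ∈ I₁ ∩ I₂, g₂ t ≤ g₁ t) := by
  obtain rfl : lam₁ = horizLine p₁ m₁ := funext hlam₁
  obtain rfl : lam₂ = horizLine p₂ m₂ := funext hlam₂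
  obtain rfl : g₁ = horizLineHeight p₁ m₁ := funext fun t => congrArg (·.2.2) (hg₁ t).symm
  obtain rfl : g₂ = horizLineHeight p₂ m₂ := funext fun t => congrArg (·.2.2) (hg₂ t).symm
  by_contra! ⟨⟨s, hs, hs_gt⟩, ⟨u, hu, hu_lt⟩⟩
  obtain ⟨t₀, ht₀, heq⟩ := (hI₁.inter hI₂).isPreconnected.intermediate_value₂ hu hs
    (continuous_horizLineHeight p₁ m₁).continuousOn
    (continuous_horizLineHeight p₂ m₂).continuousOn hu_lt.le hs_gt.le
  have hmeet : horizLine p₁ m₁ t₀ = horizLine p₂ m₂ t₀ :=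
    proj_injOn_iGraph D f (hmem₁ t₀ ht₀.1) (hmem₂ t₀ ht₀.2) (by rw [hg₁, hg₂, heq])
  have hs_sq := horizLineHeight_sub_of_eq hmeet s
  have hu_sq := horizLineHeight_sub_of_eq hmeet u
  rcases le_or_gt 0 (m₂ - m₁) with hm | hm
  · nlinarith [mul_nonneg hm (sq_nonneg (u - t₀))]
  · nlinarith [mul_nonneg (neg_nonneg.mpr hm.le) (sq_nonneg (s - t₀))]

/-- ordering of projections of two rulings of an intrinsic graph.
If `L₁ ≠ L₂` are horizontal lines, `λᵢ` parametrizes `Lᵢ` by the `x`-coordinate,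
`λᵢ(t) ∈ Γ_f` for `t` in an interval `Iᵢ`, and `Π(λᵢ(t)) = (t, 0, gᵢ(t))`, then
`g₁ ≤ g₂` on `I₁ ∩ I₂` or `g₁ ≥ g₂` on `I₁ ∩ I₂`. -/
theorem ordering_rulings
    (D : Set H) (hD : D ⊆ V0) (f : H → ℝ)
    (p₁ p₂ : H) (m₁ m₂ : ℝ)
    (lam₁ lam₂ : ℝ → H)
    (hlam₁ : ∀ t : ℝ, lam₁ t = Hmul p₁ ((t - p₁.1) * 1, (t - p₁.1) * m₁, 0))
    (hlam₂ : ∀ t : ℝ, lam₂ t = Hmul p₂ ((t - p₂.1) * 1, (t - p₂.1) * m₂, 0))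
    (I₁ I₂ : Set ℝ) (hI₁ : I₁.OrdConnected) (hI₂ : I₂.OrdConnected)
    (hmem₁ : ∀ t ∈ I₁, lam₁ t ∈ IGraph D f)
    (hmem₂ : ∀ t ∈ I₂, lam₂ t ∈ IGraph D f)
    (g₁ g₂ : ℝ → ℝ)
    (hg₁ : ∀ t : ℝ, Proj (lam₁ t) = (t, 0, g₁ t))
    (hg₂ : ∀ t : ℝ, Proj (lam₂ t) = (t, 0, g₂ t))
    (hne : Set.range lam₁ ≠ Set.range lam₂) :
    (∀ t ∈ I₁ ∩ I₂, g₁ t ≤ g₂ t) ∨ (∀ t ∈ I₁ ∩ I₂, g₂ t ≤ g₁ t) :=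
  ordering_rulings_general D f p₁ p₂ m₁ m₂ lam₁ lam₂ hlam₁ hlam₂ I₁ I₂ hI₁ hI₂ hmem₁ hmem₂ g₁ g₂ hg₁
    hg₂
end
end

section
/- Let α : ℝ → ℝ be continuous, η(w) = w + α(w)/2, and let S_α be as defined. Then there exists a continuous function f : K → ℝ with Γ_f = S_α if and only if α(w₂) − α(w₁) ≥ −2(w₂ − w₁) for all w₁ < w₂ and η : ℝ → ℝ is surjective. -/
open MeasureTheory Filter

noncomputable section

/-- Heisenberg group inverse. -/
def Hinv (p : H) : H := (-p.1, -p.2.1, -p.2.2)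

/-- The strip `K = {(x,0,z) : −1 ≤ x ≤ 1}` in `V₀`. -/
def K : Set H := {p : H | p.2.1 = 0 ∧ -1 ≤ p.1 ∧ p.1 ≤ 1}

/-- The ruled surface `S_α = ⋃_w [(−1, −α(w), η(w)), (1, α(w), η(w))]`
where `η(w) = w + α(w)/2`. -/
def Salpha (α : ℝ → ℝ) : Set H :=
  ⋃ w : ℝ, segment ℝ ((-1, -α w, w + α w / 2) : H) ((1, α w, w + α w / 2) : H)

/-!
Write `η(w) = w + α(w)/2`. The point of the `w`-th segment of `S_α` at abscissa `t` is
`(t, t α(w), η(w))`, and its intrinsic projection has height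
`h_t(w) = t² w + (1 - t²) η(w)` (`projHeight α t w`), which interpolates between `h_0 = η` and `h_1 = id`.
`S_α` is an intrinsic graph over `K` exactly when each `h_t` with `t ≠ 0` is injective and
`h_0 = η` is surjective.

If `w₁ < w₂` but `η(w₂) < η(w₁)`, then `h_t(w₂) - h_t(w₁)` changes sign on `[0, 1]`, so two
segments would cross the same vertical line over some `(t, 0, z)` with `t ≠ 0`. Conversely, if
`η` is monotone and onto, every `h_t` is monotone and onto, strictly monotone for `t ≠ 0`, and
`f(x, 0, z) = x α(w)` with `h_x(w) = z` has graph `S_α`. Its continuity comes from the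
monotonicity of `h_x`; at `x = 0` the factor `x` absorbs the ambiguity in `w`.
-/

open Set Topology

namespace Salpha

def eta (α : ℝ → ℝ) (w : ℝ) : ℝ := w + α w / 2

def projHeight (α : ℝ → ℝ) (t w : ℝ) : ℝ := w + (1 - t ^ 2) * α w / 2

variable {α : ℝ → ℝ}

lemma projHeight_eq (t w : ℝ) : projHeight α t w = t ^ 2 * w + (1 - t ^ 2) * eta α w := by
  unfold projHeight eta; ring

lemma projHeight_zero (w : ℝ) : projHeight α 0 w = eta α w := by
  simp [projHeight_eq]

lemma projHeight_one (w : ℝ) : projHeight α 1 w = w := by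
  simp [projHeight_eq]

lemma eta_sub_eq_projHeight (t w : ℝ) : eta α w - t * (t * α w) / 2 = projHeight α t w := by
  unfold projHeight eta; ring

lemma monotone_eta_iff :
    Monotone (eta α) ↔ ∀ w₁ w₂ : ℝ, w₁ < w₂ → α w₂ - α w₁ ≥ -2 * (w₂ - w₁) := by
  rw [monotone_iff_forall_lt]
  refine forall₂_congr fun w₁ w₂ => imp_congr_right fun _ => ?_
  unfold eta
  constructor <;> intro h <;> linarith

lemma mem_Salpha_iff (q : H) :
    q ∈ Salpha α ↔ ∃ w, ∃ t ∈ Icc (-1 : ℝ) 1, q = (t, t * α w, eta α w) := by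
  simp only [Salpha, mem_iUnion, segment_eq_image, mem_image, mem_Icc]
  refine exists_congr fun w => ⟨?_, ?_⟩
  · rintro ⟨θ, ⟨h0, h1⟩, rfl⟩
    refine ⟨2 * θ - 1, ⟨by linarith, by linarith⟩, ?_⟩
    simp only [eta, Prod.smul_mk, smul_eq_mul, Prod.mk_add_mk, Prod.mk.injEq]
    refine ⟨by ring, by ring, by ring⟩
  · rintro ⟨t, ⟨h0, h1⟩, rfl⟩
    refine ⟨(t + 1) / 2, ⟨by linarith, by linarith⟩, ?_⟩
    simp only [eta, Prod.smul_mk, smul_eq_mul, Prod.mk_add_mk, Prod.mk.injEq]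
    refine ⟨by ring, by ring, by ring⟩

lemma segment_point_mem_IGraph_K_iff {f : H → ℝ} {t w : ℝ} :
    ((t, t * α w, eta α w) : H) ∈ IGraph K f ↔
      t ∈ Icc (-1 : ℝ) 1 ∧ f (t, 0, projHeight α t w) = t * α w := by
  simp only [IGraph, K, mem_ofPred_eq, Prod.mk.injEq, mem_Icc, true_and]
  constructor
  · rintro ⟨x, z, hx, rfl, hy, hz⟩
    have hzw : z = projHeight α t w := by
      rw [← eta_sub_eq_projHeight, hz, ← hy]; ring
    exact ⟨hx, by rw [← hzw, hy]⟩
  · rintro ⟨ht, hf⟩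
    exact ⟨t, projHeight α t w, ht, rfl, hf.symm, by rw [hf, ← eta_sub_eq_projHeight]; ring⟩

lemma eq_of_projHeight_eq {f : H → ℝ} (hgraph : IGraph K f = Salpha α) {t w₁ w₂ : ℝ}
    (ht : t ∈ Icc (-1 : ℝ) 1) (ht0 : t ≠ 0) (h : projHeight α t w₁ = projHeight α t w₂) :
    w₁ = w₂ := by
  have mem : ∀ w, ((t, t * α w, eta α w) : H) ∈ IGraph K f := fun w => by
    rw [hgraph, mem_Salpha_iff]; exact ⟨w, t, ht, rfl⟩
  have hf₁ := (segment_point_mem_IGraph_K_iff.1 (mem w₁)).2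
  have hf₂ := (segment_point_mem_IGraph_K_iff.1 (mem w₂)).2
  have hα : α w₁ = α w₂ := mul_left_cancel₀ ht0 (by rw [← hf₁, ← hf₂, h])
  unfold projHeight at h
  rw [hα] at h
  linarith

lemma monotone_eta_of_IGraph_eq {f : H → ℝ} (hgraph : IGraph K f = Salpha α) :
    Monotone (eta α) := by
  refine monotone_iff_forall_lt.2 fun w₁ w₂ hlt => ?_
  by_contra! hη
  let gap : ℝ → ℝ := fun t => projHeight α t w₂ - projHeight α t w₁
  have hgap : ContinuousOn gap (Icc 0 1) := by
    unfold gap projHeight; fun_prop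
  have hgap0 : gap 0 < 0 := by simp only [gap, projHeight_zero]; linarith
  have hgap1 : 0 < gap 1 := by simp only [gap, projHeight_one]; linarith
  obtain ⟨t, ⟨ht0, ht1⟩, hgapt⟩ :=
    intermediate_value_Icc zero_le_one hgap ⟨hgap0.le, hgap1.le⟩
  have htne : t ≠ 0 := by rintro rfl; exact hgap0.ne hgapt
  have := eq_of_projHeight_eq hgraph ⟨by linarith, ht1⟩ htne (sub_eq_zero.1 hgapt).symm
  exact hlt.ne this

lemma surjective_eta_of_IGraph_eq {f : H → ℝ} (hgraph : IGraph K f = Salpha α) :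
    Function.Surjective (eta α) := by
  intro z
  have hmem : ((0, f (0, 0, z), z) : H) ∈ IGraph K f :=
    ⟨0, z, by simp [K], by simp⟩
  rw [hgraph, mem_Salpha_iff] at hmem
  obtain ⟨w, t, -, heq⟩ := hmem
  simp only [Prod.mk.injEq] at heq
  exact ⟨w, heq.2.2.symm⟩

section ConverseDirection

variable (hη : Monotone (eta α))
include hη

lemma monotone_projHeight {t : ℝ} (ht : t ^ 2 ≤ 1) : Monotone (projHeight α t) := by
  rw [funext (projHeight_eq t)]
  exact (monotone_id.const_mul (sq_nonneg t)).add (hη.const_mul (by linarith))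

lemma strictMono_projHeight {t : ℝ} (ht : t ^ 2 ≤ 1) (ht0 : t ≠ 0) :
    StrictMono (projHeight α t) := by
  rw [funext (projHeight_eq t)]
  exact (strictMono_id.const_mul (by positivity)).add_monotone (hη.const_mul (by linarith))

lemma exists_projHeight_eq (hα : Continuous α) (hηs : Function.Surjective (eta α)) {t : ℝ}
    (ht : t ^ 2 ≤ 1) (z : ℝ) : ∃ w, projHeight α t w = z := by
  obtain ⟨v, hv⟩ := hηs z
  have hcont : ContinuousOn (projHeight α t) (Icc (min z v) (max z v)) := by
    unfold projHeight; fun_prop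
  -- `projHeight α t` is a convex combination of `id` and `eta α`, both `≤ z` at `min z v`
  -- and `≥ z` at `max z v`.
  have hlo : projHeight α t (min z v) ≤ z := by
    have : eta α (min z v) ≤ z := (hη (min_le_right z v)).trans hv.le
    rw [projHeight_eq]; nlinarith [min_le_left z v]
  have hhi : z ≤ projHeight α t (max z v) := by
    have : z ≤ eta α (max z v) := hv.ge.trans (hη (le_max_right z v))
    rw [projHeight_eq]; nlinarith [le_max_left z v]
  obtain ⟨w, -, hw⟩ := intermediate_value_Icc min_le_max hcont ⟨hlo, hhi⟩
  exact ⟨w, hw⟩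

end ConverseDirection

section SolutionsOfMonotoneEquations

variable {X : Type*} {l : Filter X} {φ : X → ℝ → ℝ} {φ₀ : ℝ → ℝ} {g z : X → ℝ} {z₀ : ℝ}

lemma eventually_mem_Ioo_of_monotone (hφ : ∀ w, Tendsto (φ · w) l (𝓝 (φ₀ w)))
    (hmono : ∀ᶠ x in l, Monotone (φ x)) (hg : ∀ᶠ x in l, φ x (g x) = z x)
    (hz : Tendsto z l (𝓝 z₀)) {a b : ℝ} (ha : φ₀ a < z₀) (hb : z₀ < φ₀ b) :
    ∀ᶠ x in l, g x ∈ Ioo a b := by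
  filter_upwards [(hφ a).eventually_lt hz ha, hz.eventually_lt (hφ b) hb, hmono, hg]
    with x hxa hxb hmx hgx
  rw [← hgx] at hxa hxb
  exact ⟨hmx.reflect_lt hxa, hmx.reflect_lt hxb⟩

lemma tendsto_of_monotone_of_strictMono (hφ : ∀ w, Tendsto (φ · w) l (𝓝 (φ₀ w)))
    (hmono : ∀ᶠ x in l, Monotone (φ x)) (hg : ∀ᶠ x in l, φ x (g x) = z x)
    (hz : Tendsto z l (𝓝 z₀)) (hφ₀ : StrictMono φ₀) {w₀ : ℝ} (hw₀ : φ₀ w₀ = z₀) :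
    Tendsto g l (𝓝 w₀) := by
  have mem_Ioo {a b : ℝ} (ha : a < w₀) (hb : w₀ < b) : ∀ᶠ x in l, g x ∈ Ioo a b :=
    eventually_mem_Ioo_of_monotone hφ hmono hg hz (hw₀ ▸ hφ₀ ha) (hw₀ ▸ hφ₀ hb)
  refine tendsto_order.2 ⟨fun a ha => ?_, fun b hb => ?_⟩
  · exact (mem_Ioo ha (lt_add_one w₀)).mono fun _ h => h.1
  · exact (mem_Ioo (sub_one_lt w₀) hb).mono fun _ h => h.2

end SolutionsOfMonotoneEquations

lemma continuousOn_mul_comp_of_projHeight_eq (hα : Continuous α) (hη : Monotone (eta α))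
    (hηs : Function.Surjective (eta α)) {W : H → ℝ}
    (hW : ∀ p ∈ K, projHeight α p.1 (W p) = p.2.2) :
    ContinuousOn (fun p : H => p.1 * α (W p)) K := by
  intro p hp
  have hφ : ∀ w, Tendsto (fun q : H => projHeight α q.1 w) (𝓝[K] p) (𝓝 (projHeight α p.1 w)) :=
    fun w => by
      apply Continuous.continuousWithinAt
      unfold projHeight; fun_prop
  have hmono : ∀ᶠ q in 𝓝[K] p, Monotone (projHeight α q.1) := by
    filter_upwards [self_mem_nhdsWithin] with q hq
    obtain ⟨-, h1, h2⟩ := hq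
    exact monotone_projHeight hη (by nlinarith)
  have hWev : ∀ᶠ q in 𝓝[K] p, projHeight α q.1 (W q) = q.2.2 :=
    eventually_nhdsWithin_of_forall hW
  have hz : Tendsto (fun q : H => q.2.2) (𝓝[K] p) (𝓝 p.2.2) :=
    (continuous_snd.snd.tendsto p).mono_left nhdsWithin_le_nhds
  have hx : Tendsto (fun q : H => q.1) (𝓝[K] p) (𝓝 p.1) :=
    (continuous_fst.tendsto p).mono_left nhdsWithin_le_nhds
  rcases eq_or_ne p.1 0 with hp0 | hp0
  · obtain ⟨a, ha⟩ := hηs (p.2.2 - 1)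
    obtain ⟨b, hb⟩ := hηs (p.2.2 + 1)
    have hWab : ∀ᶠ q in 𝓝[K] p, W q ∈ Ioo a b := by
      refine eventually_mem_Ioo_of_monotone hφ hmono hWev hz ?_ ?_ <;>
        simp only [hp0, projHeight_zero, ha, hb] <;> linarith
    obtain ⟨C, hC⟩ := isCompact_Icc.exists_bound_of_continuousOn (hα.continuousOn (s := Icc a b))
    have hbdd : IsBoundedUnder (· ≤ ·) (𝓝[K] p) (fun q => ‖α (W q)‖) :=
      isBoundedUnder_of_eventually_le (a := C)
        (hWab.mono fun q hq => hC _ (Ioo_subset_Icc_self hq))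
    show Tendsto _ _ (𝓝 (p.1 * α (W p)))
    rw [hp0, zero_mul]
    exact (hp0 ▸ hx).zero_mul_isBoundedUnder_le hbdd
  · have hp1 : p.1 ^ 2 ≤ 1 := by obtain ⟨-, h1, h2⟩ := hp; nlinarith
    exact hx.mul (hα.continuousAt.tendsto.comp (tendsto_of_monotone_of_strictMono hφ hmono hWev
      hz (strictMono_projHeight hη hp1 hp0) (hW p hp)))

lemma IGraph_eq_Salpha_of_projHeight_eq (hη : Monotone (eta α)) {W : H → ℝ}
    (hW : ∀ p ∈ K, projHeight α p.1 (W p) = p.2.2) :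
    IGraph K (fun p : H => p.1 * α (W p)) = Salpha α := by
  ext q
  rw [mem_Salpha_iff]
  constructor
  · rintro ⟨x, z, hK, rfl⟩
    have hWz : projHeight α x (W (x, 0, z)) = z := hW _ hK
    refine ⟨W (x, 0, z), x, hK.2, ?_⟩
    simp only [Prod.mk.injEq, true_and]
    linear_combination -eta_sub_eq_projHeight (α := α) x (W (x, 0, z)) - hWz
  · rintro ⟨w, t, ht, rfl⟩
    refine segment_point_mem_IGraph_K_iff.2 ⟨ht, ?_⟩
    rcases eq_or_ne t 0 with rfl | ht0
    · simp
    · have ht1 : t ^ 2 ≤ 1 := by obtain ⟨h1, h2⟩ := ht; nlinarith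
      have hWw : W (t, 0, projHeight α t w) = w :=
        (strictMono_projHeight hη ht1 ht0).injective (hW _ ⟨rfl, ht⟩)
      rw [hWw]

end Salpha

open Salpha

/-- `S_α` is a graphical strip over `K` (i.e. there is a continuous
`f : K → ℝ` with `Γ_f = S_α`) if and only if `α(w₂) − α(w₁) ≥ −2(w₂ − w₁)` for
all `w₁ < w₂` and `η(w) = w + α(w)/2` is surjective. -/
theorem strip_injectivity (α : ℝ → ℝ) (hα : Continuous α) :
    (∃ f : H → ℝ, ContinuousOn f K ∧ IGraph K f = Salpha α) ↔
      ((∀ w₁ w₂ : ℝ, w₁ < w₂ → α w₂ - α w₁ ≥ -2 * (w₂ - w₁)) ∧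
        Function.Surjective (fun w : ℝ => w + α w / 2)) := by
  rw [← monotone_eta_iff]
  constructor
  · rintro ⟨f, -, hgraph⟩
    exact ⟨monotone_eta_of_IGraph_eq hgraph, surjective_eta_of_IGraph_eq hgraph⟩
  · rintro ⟨hη, hηs⟩
    have hsol : ∀ p ∈ K, ∃ w, projHeight α p.1 w = p.2.2 := fun p ⟨_, h1, h2⟩ =>
      exists_projHeight_eq hη hα hηs (by nlinarith) _
    choose! W hW using hsol
    exact ⟨_, continuousOn_mul_comp_of_projHeight_eq hα hη hηs hW,
      IGraph_eq_Salpha_of_projHeight_eq hη hW⟩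
end
end

section
/- Let α : ℝ → ℝ be continuous such that S_α is a graphical strip over K, i.e., there is a continuous f : K → ℝ with Γ_f = S_α. Then the following are equivalent: (i) α(w₂) − α(w₁) ≥ −(w₂ − w₁) for all w₁ < w₂; (ii) there is a function σ : ℝ → ℝ such that −2(z₂ − z₁) ≤ σ(z₂) − σ(z₁) < 2(z₂ − z₁) for all z₁ < z₂, and S_α = ⋃_{z∈ℝ} [(−1, −σ(z), z), (1, σ(z), z)]. -/
/-!
Write `η(w) = w + α(w)/2` for the height at which the `w`-th segment crosses the `z`-axis.
Condition (i) says exactly that `η(w₂) − η(w₁) ≥ (w₂ − w₁)/2`, so `η` is an increasing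
homeomorphism of `ℝ`, and `S_α` is the same family of segments reindexed by `z = η(w)`, with
`σ = α ∘ η⁻¹`. Conversely, the right endpoint `(1, α(w), η(w))` of a segment of `S_α` can only be
the right endpoint of the `σ`-segment at height `η(w)`, so `σ(η(w)) = α(w)`. In both directions the
identity `σ(z₂) − σ(z₁) = 2(z₂ − z₁) − 2(w₂ − w₁)` for `zᵢ = η(wᵢ)` turns one set of bounds into the
other.
-/

open MeasureTheory Filter

noncomputable section

lemma eq_of_mem_segment_of_fst_eq_one {s z c d : ℝ}
    (h : ((1 : ℝ), c, d) ∈ segment ℝ ((-1, -s, z) : H) ((1, s, z) : H)) :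
    c = s ∧ d = z := by
  obtain ⟨a, b, -, -, hab, heq⟩ := h
  simp only [Prod.ext_iff, Prod.smul_mk, Prod.fst_add, Prod.snd_add, smul_eq_mul] at heq
  obtain ⟨hx, hy, hz⟩ := heq
  obtain rfl : a = 0 := by linarith
  obtain rfl : b = 1 := by linarith
  constructor <;> linarith

section GrowthBound

variable {f : ℝ → ℝ} {c : ℝ}

lemma strictMono_of_mul_sub_le_sub (hc : 0 < c) (h : ∀ x y, x < y → c * (y - x) ≤ f y - f x) :
    StrictMono f := fun x y hxy => by
  nlinarith [h x y hxy, mul_pos hc (sub_pos.2 hxy)]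

lemma surjective_of_mul_sub_le_sub (hf : Continuous f) (hc : 0 < c)
    (h : ∀ x y, x < y → c * (y - x) ≤ f y - f x) : Function.Surjective f := by
  refine hf.surjective ?_ ?_
  · refine tendsto_atTop_mono' atTop ?_
      ((tendsto_id.const_mul_atTop hc).atTop_add (tendsto_const_nhds (x := f 0)))
    filter_upwards [eventually_gt_atTop 0] with x hx
    have := h 0 x hx
    simp only [id]
    linarith
  · refine tendsto_atBot_mono' atBot ?_
      ((tendsto_id.const_mul_atBot hc).atBot_add (tendsto_const_nhds (x := f 0)))
    filter_upwards [eventually_lt_atBot 0] with x hx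
    have := h x 0 hx
    simp only [id]
    linarith

end GrowthBound

section Reparametrization

variable {α : ℝ → ℝ}

lemma exists_reparametrization (hα : Continuous α)
    (hi : ∀ w₁ w₂ : ℝ, w₁ < w₂ → α w₂ - α w₁ ≥ -(w₂ - w₁)) :
    ∃ σ : ℝ → ℝ,
      (∀ z₁ z₂ : ℝ, z₁ < z₂ →
        -2 * (z₂ - z₁) ≤ σ z₂ - σ z₁ ∧ σ z₂ - σ z₁ < 2 * (z₂ - z₁)) ∧
      Salpha α = ⋃ z : ℝ, segment ℝ ((-1, -σ z, z) : H) ((1, σ z, z) : H) := by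
  set η : ℝ → ℝ := fun w => w + α w / 2
  have hη : ∀ w₁ w₂, w₁ < w₂ → 1 / 2 * (w₂ - w₁) ≤ η w₂ - η w₁ := fun w₁ w₂ hw => by
    have := hi w₁ w₂ hw
    simp only [η]
    linarith
  let e : ℝ ≃o ℝ := (strictMono_of_mul_sub_le_sub one_half_pos hη).orderIsoOfSurjective η
    (surjective_of_mul_sub_le_sub (by fun_prop) one_half_pos hη)
  have he : ∀ z, e.symm z + α (e.symm z) / 2 = z := e.apply_symm_apply
  refine ⟨fun z => α (e.symm z), fun z₁ z₂ hz => ?_, ?_⟩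
  · have hw := e.symm.strictMono hz
    have := hi _ _ hw
    have := he z₁
    have := he z₂
    constructor <;> dsimp only <;> linarith
  · conv_rhs => rw [← e.surjective.iUnion_comp]
    simp only [OrderIso.symm_apply_apply]
    rfl

lemma apply_add_half_eq_of_Salpha_eq {σ : ℝ → ℝ}
    (hS : Salpha α = ⋃ z : ℝ, segment ℝ ((-1, -σ z, z) : H) ((1, σ z, z) : H)) (w : ℝ) :
    σ (w + α w / 2) = α w := by
  have hmem : ((1 : ℝ), α w, w + α w / 2) ∈ Salpha α :=
    Set.mem_iUnion.2 ⟨w, right_mem_segment ℝ _ _⟩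
  rw [hS] at hmem
  obtain ⟨z, hz⟩ := Set.mem_iUnion.1 hmem
  obtain ⟨hσz, hzw⟩ := eq_of_mem_segment_of_fst_eq_one hz
  rw [hzw, hσz]

lemma sub_ge_of_reparametrization {σ : ℝ → ℝ}
    (hσ : ∀ z₁ z₂ : ℝ, z₁ < z₂ →
      -2 * (z₂ - z₁) ≤ σ z₂ - σ z₁ ∧ σ z₂ - σ z₁ < 2 * (z₂ - z₁))
    (hσα : ∀ w, σ (w + α w / 2) = α w) {w₁ w₂ : ℝ} (hw : w₁ < w₂) :
    α w₂ - α w₁ ≥ -(w₂ - w₁) := by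
  have h₁ := hσα w₁
  have h₂ := hσα w₂
  rcases lt_trichotomy (w₁ + α w₁ / 2) (w₂ + α w₂ / 2) with hz | hz | hz
  · linarith [(hσ _ _ hz).1]
  · have : α w₁ = α w₂ := by rw [← h₁, ← h₂, hz]
    linarith
  · linarith [(hσ _ _ hz).2]

end Reparametrization

theorem strip_alternate_general (α : ℝ → ℝ) (hα : Continuous α) :
    (∀ w₁ w₂ : ℝ, w₁ < w₂ → α w₂ - α w₁ ≥ -(w₂ - w₁)) ↔
      (∃ σ : ℝ → ℝ,
        (∀ z₁ z₂ : ℝ, z₁ < z₂ →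
          -2 * (z₂ - z₁) ≤ σ z₂ - σ z₁ ∧ σ z₂ - σ z₁ < 2 * (z₂ - z₁)) ∧
        Salpha α = ⋃ z : ℝ, segment ℝ ((-1, -σ z, z) : H) ((1, σ z, z) : H)) :=
  ⟨exists_reparametrization hα, fun ⟨_, hσ, hS⟩ _ _ hw =>
    sub_ge_of_reparametrization hσ (apply_add_half_eq_of_Salpha_eq hS) hw⟩

/-- for a graphical strip `S_α` over `K`, the condition
`α(w₂) − α(w₁) ≥ −(w₂ − w₁)` is equivalent to the existence of `σ` with
`−2(z₂−z₁) ≤ σ(z₂) − σ(z₁) < 2(z₂−z₁)` such that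
`S_α = ⋃_z [(−1, −σ(z), z), (1, σ(z), z)]`. -/
theorem strip_alternate (α : ℝ → ℝ) (hα : Continuous α)
    (hstrip : ∃ f : H → ℝ, ContinuousOn f K ∧ IGraph K f = Salpha α) :
    (∀ w₁ w₂ : ℝ, w₁ < w₂ → α w₂ - α w₁ ≥ -(w₂ - w₁)) ↔
      (∃ σ : ℝ → ℝ,
        (∀ z₁ z₂ : ℝ, z₁ < z₂ →
          -2 * (z₂ - z₁) ≤ σ z₂ - σ z₁ ∧ σ z₂ - σ z₁ < 2 * (z₂ - z₁)) ∧
        Salpha α = ⋃ z : ℝ, segment ℝ ((-1, -σ z, z) : H) ((1, σ z, z) : H)) :=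
  strip_alternate_general α hα
end
end

section
/- Let α, τ : ℝ → ℝ be continuous with α(w₂) − α(w₁) ≥ −2(w₂ − w₁) for all w₁ < w₂, with η(w) = w + α(w)/2 surjective, and with |τ(a) − τ(b)| ≤ L·|a − b| for all a, b and some constant L < 2. Let h : ℝ → ℝ be a function satisfying h(w) − τ(h(w))/2 = η(w) for all w ∈ ℝ. Define Σ_{τ,α} = ⋃_{w∈ℝ} [(0, τ(h(w)), h(w)), (1, α(w), η(w))], where [p,q] is the Euclidean line segment in ℝ³ (each such segment is a horizontal segment). Then the intrinsic projection Π is injective on Σ_{τ,α}; that is, Σ_{τ,α} is an intrinsic graph. -/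
open MeasureTheory Filter

noncomputable section

/-!
Write `η(w) = w + α(w)/2`. On the vertical plane `x = t` the surface meets each segment in one
point, whose `Π`-height is `(1 - t)² h(w) + 2t(1 - t) η(w) + t² w` once
`τ(h(w)) = 2(h(w) - η(w))` is substituted. Here `η` is nondecreasing by the slope bound on `α`,
and so is `h`, because `x ↦ x - τ(x)/2` is strictly increasing when `τ` is `L`-Lipschitz with
`L < 2`. Hence for `t > 0` the height is strictly increasing in `w`, and at `t = 0` the point
`(0, τ(h(w)), h(w))` is determined by `h(w)`.
-/

open Set

lemma mem_segment_zero_one_iff {p : H} {y₀ z₀ y₁ z₁ : ℝ} :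
    p ∈ segment ℝ ((0, y₀, z₀) : H) (1, y₁, z₁) ↔
      ∃ t ∈ Icc (0 : ℝ) 1, p = (t, (1 - t) * y₀ + t * y₁, (1 - t) * z₀ + t * z₁) := by
  simp [segment_eq_image, eq_comm]

lemma Proj_mk (t y z : ℝ) : Proj (t, y, z) = (t, 0, z - t * y / 2) := rfl

theorem injOn_Proj_iUnion_segment {ι : Type*} (y₀ z₀ y₁ z₁ : ι → ℝ)
    (hstart : ∀ i j, z₀ i = z₀ j → y₀ i = y₀ j)
    (hheight : ∀ t ∈ Ioc (0 : ℝ) 1, Function.Injective fun i =>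
      (1 - t) * z₀ i + t * z₁ i - t * ((1 - t) * y₀ i + t * y₁ i) / 2) :
    InjOn Proj (⋃ i, segment ℝ ((0, y₀ i, z₀ i) : H) (1, y₁ i, z₁ i)) := by
  intro p hp q hq hpq
  simp only [mem_iUnion, mem_segment_zero_one_iff] at hp hq
  obtain ⟨i, t, ⟨ht₀, ht₁⟩, rfl⟩ := hp
  obtain ⟨j, s, -, rfl⟩ := hq
  simp only [Proj_mk, Prod.mk.injEq, true_and] at hpq
  obtain ⟨rfl, hz⟩ := hpq
  rcases ht₀.eq_or_lt with rfl | ht₀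
  · have hz₀ : z₀ i = z₀ j := by simpa using hz
    simp [hz₀, hstart i j hz₀]
  · obtain rfl : i = j := hheight t ⟨ht₀, ht₁⟩ hz
    rfl

lemma strictMono_sub_half_of_lipschitz {τ : ℝ → ℝ} {L : ℝ} (hL : L < 2)
    (hLip : ∀ a b, |τ a - τ b| ≤ L * |a - b|) : StrictMono fun x => x - τ x / 2 := by
  intro a b hab
  have hτ : τ b - τ a ≤ L * (b - a) := by
    simpa [abs_of_pos (sub_pos.mpr hab)] using (le_abs_self _).trans (hLip b a)
  nlinarith

theorem sigma_tau_alpha_intrinsic_graph_general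
    (α τ : ℝ → ℝ)
    (hmono : ∀ w₁ w₂ : ℝ, w₁ < w₂ → α w₂ - α w₁ ≥ -2 * (w₂ - w₁))
    (L : ℝ) (hL : L < 2) (hLip : ∀ a b : ℝ, |τ a - τ b| ≤ L * |a - b|)
    (h : ℝ → ℝ) (hh : ∀ w : ℝ, h w - τ (h w) / 2 = w + α w / 2) :
    Set.InjOn Proj
      (⋃ w : ℝ, segment ℝ ((0, τ (h w), h w) : H) ((1, α w, w + α w / 2) : H)) := by
  have hη : Monotone fun w => w + α w / 2 := monotone_iff_forall_lt.mpr fun w₁ w₂ hw => by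
    linarith [hmono w₁ w₂ hw]
  have hmono_h : Monotone h := fun w₁ w₂ hw =>
    (strictMono_sub_half_of_lipschitz hL hLip).le_iff_le.mp (by simpa only [hh] using hη hw)
  refine injOn_Proj_iUnion_segment _ _ _ _ (fun _ _ hz => by rw [hz]) fun t ⟨ht₀, ht₁⟩ => ?_
  have hheight : ∀ w, (1 - t) * h w + t * (w + α w / 2) - t * ((1 - t) * τ (h w) + t * α w) / 2
      = (1 - t) ^ 2 * h w + 2 * t * (1 - t) * (w + α w / 2) + t ^ 2 * w := fun w => by
    rw [show τ (h w) = 2 * (h w - (w + α w / 2)) by linarith [hh w]]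
    ring
  simp only [hheight]
  refine (((hmono_h.const_mul (sq_nonneg (1 - t))).add (hη.const_mul ?_)).add_strictMono
    (strictMono_id.const_mul (pow_pos ht₀ 2))).injective
  exact mul_nonneg (by positivity) (sub_nonneg.mpr ht₁)

/-- the ruled surface `Σ_{τ,α} = ⋃_w [(0, τ(h(w)), h(w)), (1, α(w), η(w))]`
is an intrinsic graph, i.e. `Π` is injective on it. -/
theorem sigma_tau_alpha_intrinsic_graph
    (α τ : ℝ → ℝ) (hα : Continuous α) (hτ : Continuous τ)
    (hmono : ∀ w₁ w₂ : ℝ, w₁ < w₂ → α w₂ - α w₁ ≥ -2 * (w₂ - w₁))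
    (hsurj : Function.Surjective (fun w : ℝ => w + α w / 2))
    (L : ℝ) (hL : L < 2) (hLip : ∀ a b : ℝ, |τ a - τ b| ≤ L * |a - b|)
    (h : ℝ → ℝ) (hh : ∀ w : ℝ, h w - τ (h w) / 2 = w + α w / 2) :
    Set.InjOn Proj
      (⋃ w : ℝ, segment ℝ ((0, τ (h w), h w) : H) ((1, α w, w + α w / 2) : H)) :=
  sigma_tau_alpha_intrinsic_graph_general α τ hmono L hL hLip h hh
end
end

section
/- Let α : ℝ → ℝ be Lipschitz with α(w₂) − α(w₁) ≥ −2(w₂ − w₁) for all w₁ < w₂, let η(w) = w + α(w)/2 (so η is nondecreasing), and let α' denote the a.e. derivative of α. Let w₁ < w₂ and let τ : ℝ → ℝ be C^∞ with compact support contained in [η(w₁), η(w₂)]. Then there exists a constant C > 0 (depending on α and τ) such that for every λ with |λ| < 1/C and every pair of functions Z₊, Z₋ : ℝ → ℝ satisfying Z₊(z) − (λ/2)·τ(Z₊(z)) = z and Z₋(z) + (λ/2)·τ(Z₋(z)) = z for all z ∈ ℝ, setting δ₊(w) = α(w) − λ·τ(Z₊(η(w))) and δ₋(w) = α(w) + λ·τ(Z₋(η(w))),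 one has | ∫_{w₁}^{w₂} (√(1+δ₊(w)²) + √(1+δ₋(w)²) − 2√(1+α(w)²))·(1 + α'(w)/2) dw − λ²·∫_{w₁}^{w₂} τ(η(w))²·(1 + α'(w))·(1 + α(w)²)^{−3/2} dw | ≤ C·(w₂ − w₁)·|λ|³. -/
open MeasureTheory Filter Topology
set_option maxHeartbeats 1600000
noncomputable section
namespace SV
def p (x : ℝ) : ℝ := Real.sqrt (1 + x ^ 2)
def q (x : ℝ) : ℝ := x / Real.sqrt (1 + x ^ 2)
def r (x : ℝ) : ℝ := (1 + x ^ 2) ^ (-(3:ℝ)/2)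
lemma one_add_sq_pos (x : ℝ) : (0:ℝ) < 1 + x ^ 2 := by positivity
lemma p_pos (x : ℝ) : 0 < p x := Real.sqrt_pos.2 (one_add_sq_pos x)
lemma p_sq (x : ℝ) : p x ^ 2 = 1 + x ^ 2 := Real.sq_sqrt (one_add_sq_pos x).le

lemma r_eq (x : ℝ) : r x = 1 / (p x) ^ 3 := by
  have h0 := one_add_sq_pos x
  rw [r, p, ← Real.rpow_natCast (Real.sqrt (1 + x ^ 2)) 3,
    Real.sqrt_eq_rpow, ← Real.rpow_mul h0.le, one_div, ← Real.rpow_neg h0.le]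
  norm_num

lemma abs_le_p (x : ℝ) : |x| ≤ p x := by
  rw [← Real.sqrt_sq_eq_abs]
  exact Real.sqrt_le_sqrt (by nlinarith)

lemma one_le_p (x : ℝ) : 1 ≤ p x := by
  rw [show (1:ℝ) = Real.sqrt 1 by simp]
  exact Real.sqrt_le_sqrt (by nlinarith)

lemma hasDerivAt_p (x : ℝ) : HasDerivAt p (q x) x := by
  have h1 : HasDerivAt (fun y : ℝ => 1 + y ^ 2) (2 * x) x := by
    simpa using ((hasDerivAt_pow 2 x).const_add 1)
  have h2 := (Real.hasDerivAt_sqrt (one_add_sq_pos x).ne').comp x h1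
  refine h2.congr_deriv (Eq.symm ?_)
  simp only [q, p]
  field_simp

lemma hasDerivAt_q (x : ℝ) : HasDerivAt q (r x) x := by
  have h := (hasDerivAt_id x).div (hasDerivAt_p x) (p_pos x).ne'
  have he : (1 * p x - id x * q x) / p x ^ 2 = r x := by
    have hp := (p_pos x).ne'
    have hsq := p_sq x
    rw [r_eq]
    simp only [q, id, show Real.sqrt (1 + x ^ 2) = p x from rfl]
    field_simp
    have key : p x * p x - x * x = 1 := by nlinarith [p_sq x]
    linarith [p_sq x]
  rw [← he]
  exact h

lemma rpow_aux_le_one (x c : ℝ) (hc : c ≤ 0) : (1 + x ^ 2) ^ c ≤ 1 :=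
  Real.rpow_le_one_of_one_le_of_nonpos (by nlinarith) hc

lemma abs_q_le (x : ℝ) : |q x| ≤ 1 := by
  have hp : (0:ℝ) < |Real.sqrt (1 + x ^ 2)| := abs_pos.2 (p_pos x).ne'
  rw [q, abs_div, div_le_one hp]
  exact le_trans (abs_le_p x) (le_abs_self _)

lemma abs_r_le (x : ℝ) : |r x| ≤ 1 := by
  rw [r, abs_of_pos (Real.rpow_pos_of_pos (one_add_sq_pos x) _)]
  exact rpow_aux_le_one x _ (by norm_num)

lemma mem_uIcc_abs {a v y : ℝ} (h : y ∈ Set.uIcc a (a + v)) : |y - a| ≤ |v| := by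
  rcases le_total 0 v with hv | hv
  · rw [Set.uIcc_of_le (by linarith)] at h
    rw [abs_of_nonneg (by linarith [h.1]), abs_of_nonneg hv]; linarith [h.2]
  · rw [Set.uIcc_of_ge (by linarith)] at h
    rw [abs_of_nonpos (by linarith [h.2]), abs_of_nonpos hv]; linarith [h.1]

/-- general mean value bound -/
lemma mvt_bound (f f' : ℝ → ℝ) (hf : ∀ y, HasDerivAt f (f' y) y) (C : ℝ)
    (hC : ∀ y, |f' y| ≤ C) (x y : ℝ) : |f x - f y| ≤ C * |x - y| := by
  have := Convex.norm_image_sub_le_of_norm_hasDerivWithin_le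
    (f := f) (f' := f') (s := Set.univ) (C := C)
    (fun z _ => (hf z).hasDerivWithinAt) (fun z _ => hC z) convex_univ
    (Set.mem_univ y) (Set.mem_univ x)
  simpa [Real.norm_eq_abs] using this

/-- general second-order Taylor bound -/
lemma taylor2 (f f' : ℝ → ℝ) (hf : ∀ y, HasDerivAt f (f' y) y) (L : ℝ)
    (hL : ∀ y z, |f' y - f' z| ≤ L * |y - z|) (a v : ℝ) :
    |f (a + v) - f a - v * f' a| ≤ L * v ^ 2 := by
  set g : ℝ → ℝ := fun y => f y - y * f' a with hg
  have hgd : ∀ y, HasDerivAt g (f' y - f' a) y := by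
    intro y
    have := (hf y).sub ((hasDerivAt_id y).mul_const (f' a))
    exact this.congr_deriv (by simp)
  have hb : ∀ y ∈ Set.uIcc a (a + v), ‖f' y - f' a‖ ≤ L * |v| := by
    intro y hy
    have h1 := mem_uIcc_abs hy
    have hLnn : 0 ≤ L := by
      by_contra hneg
      push_neg at hneg
      have h2 := hL (a+1) a
      simp only [show a + 1 - a = (1:ℝ) by ring, abs_one, mul_one] at h2
      exact absurd (le_trans (abs_nonneg _) h2) (not_le.2 hneg)
    rw [Real.norm_eq_abs]
    exact le_trans (hL y a) (by nlinarith [abs_nonneg (y - a), abs_nonneg v])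
  have key := Convex.norm_image_sub_le_of_norm_hasDerivWithin_le
    (f := g) (f' := fun y => f' y - f' a) (s := Set.uIcc a (a + v)) (C := L * |v|)
    (fun z hz => (hgd z).hasDerivWithinAt) hb (convex_uIcc _ _)
    (Set.left_mem_uIcc) (Set.right_mem_uIcc)
  have : g (a + v) - g a = f (a + v) - f a - v * f' a := by simp [hg]; ring
  rw [Real.norm_eq_abs, this] at key
  calc |f (a + v) - f a - v * f' a| ≤ L * |v| * ‖a + v - a‖ := key
    _ = L * v ^ 2 := by
        rw [Real.norm_eq_abs, show a + v - a = v by ring, mul_assoc, abs_mul_abs_self]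
        ring

def r1 (x : ℝ) : ℝ := -(3:ℝ)/2 * (1 + x ^ 2) ^ (-(3:ℝ)/2 - 1) * (2 * x)

lemma hasDerivAt_r (x : ℝ) : HasDerivAt r (r1 x) x := by
  have h1 : HasDerivAt (fun y : ℝ => 1 + y ^ 2) (2 * x) x := by
    simpa using ((hasDerivAt_pow 2 x).const_add 1)
  have h2 := (Real.hasDerivAt_rpow_const
    (x := 1 + x ^ 2) (p := -(3:ℝ)/2) (Or.inl (one_add_sq_pos x).ne')).comp x h1
  exact h2.congr_deriv (by simp only [r1])

lemma abs_r1_le (x : ℝ) : |r1 x| ≤ 3 := by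
  have h0 := one_add_sq_pos x
  have hrp : (0:ℝ) < (1 + x ^ 2) ^ (-(3:ℝ)/2 - 1) := Real.rpow_pos_of_pos h0 _
  have hx : |x| ≤ 1 + x ^ 2 := by nlinarith [sq_nonneg (|x| - 1), sq_abs x]
  have key : (1 + x ^ 2) ^ (-(3:ℝ)/2 - 1) * (1 + x ^ 2) = (1 + x ^ 2) ^ (-(3:ℝ)/2) := by
    rw [← Real.rpow_add_one h0.ne' (-(3:ℝ)/2 - 1)]
    norm_num
  have h2 : (1 + x ^ 2) ^ (-(3:ℝ)/2) ≤ 1 := rpow_aux_le_one x _ (by norm_num)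
  have : |r1 x| = 3 * ((1 + x ^ 2) ^ (-(3:ℝ)/2 - 1) * |x|) := by
    rw [r1, abs_mul, abs_mul, abs_of_pos hrp]
    rw [show |(-(3:ℝ)/2)| = 3/2 by norm_num, abs_mul, show |(2:ℝ)| = 2 by norm_num]
    ring
  rw [this]
  nlinarith [hrp, abs_nonneg x]

lemma r_lip (x y : ℝ) : |r x - r y| ≤ 3 * |x - y| :=
  mvt_bound r r1 hasDerivAt_r 3 abs_r1_le x y

lemma q_lip (x y : ℝ) : |q x - q y| ≤ 1 * |x - y| :=
  mvt_bound q r hasDerivAt_q 1 abs_r_le x y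

lemma q_taylor (a v : ℝ) : |q (a + v) - q a - v * r a| ≤ 3 * v ^ 2 :=
  taylor2 q r hasDerivAt_q 3 r_lip a v

lemma p_taylor (a v : ℝ) : |p (a + v) - p a - v * q a - v ^ 2 / 2 * r a| ≤ 3 * |v| ^ 3 := by
  set g : ℝ → ℝ := fun y => p y - (y - a) * q a - (y - a) ^ 2 / 2 * r a with hg
  have hgd : ∀ y, HasDerivAt g (q y - q a - (y - a) * r a) y := by
    intro y
    have h1 : HasDerivAt (fun y : ℝ => (y - a) * q a) (q a) y := by
      simpa using (((hasDerivAt_id y).sub_const a).mul_const (q a))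
    have h2 : HasDerivAt (fun y : ℝ => (y - a) ^ 2 / 2 * r a) ((y - a) * r a) y := by
      have := (((hasDerivAt_id y).sub_const a).pow 2)
      have h3 := (this.div_const 2).mul_const (r a)
      have h3' : HasDerivAt (fun y : ℝ => (y - a) ^ 2 / 2 * r a)
          (↑2 * (id y - a) ^ (2 - 1) * 1 / 2 * r a) y := h3
      have h4 : (↑2 * (id y - a) ^ (2 - 1) * 1 / 2 * r a : ℝ) = (y - a) * r a := by
        push_cast
        simp only [id_eq, pow_one]
        ring
      exact h4 ▸ h3'
    exact ((hasDerivAt_p y).sub h1).sub h2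
  have hb : ∀ y ∈ Set.uIcc a (a + v), ‖q y - q a - (y - a) * r a‖ ≤ 3 * v ^ 2 := by
    intro y hy
    have h1 := mem_uIcc_abs hy
    have h2 : |q (a + (y - a)) - q a - (y - a) * r a| ≤ 3 * (y - a) ^ 2 := q_taylor a (y - a)
    rw [show a + (y - a) = y by ring] at h2
    rw [Real.norm_eq_abs]
    refine le_trans h2 (by nlinarith [sq_abs (y - a), sq_abs v, abs_nonneg (y - a), abs_nonneg v])
  have key := Convex.norm_image_sub_le_of_norm_hasDerivWithin_le
    (f := g) (f' := fun y => q y - q a - (y - a) * r a) (s := Set.uIcc a (a + v))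
    (C := 3 * v ^ 2)
    (fun z hz => (hgd z).hasDerivWithinAt) hb (convex_uIcc _ _)
    (Set.left_mem_uIcc) (Set.right_mem_uIcc)
  have he : g (a + v) - g a = p (a + v) - p a - v * q a - v ^ 2 / 2 * r a := by
    simp only [hg]; ring_nf
  rw [Real.norm_eq_abs, he, Real.norm_eq_abs, show a + v - a = v by ring] at key
  refine le_trans key ?_
  have : |v| ^ 3 = v ^ 2 * |v| := by
    rw [pow_succ, sq_abs]
  rw [this]
  ring_nf
  exact le_refl _

/-- FTC for Lipschitz functions with a.e. derivative. -/
lemma lip_ftc (f f' : ℝ → ℝ) (K : ℝ) (hf : Continuous f)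
    (hlip : ∀ x y, |f x - f y| ≤ K * |x - y|)
    (hd : ∀ᵐ x : ℝ ∂volume, HasDerivAt f (f' x) x) (a b : ℝ) (hab : a ≤ b) :
    ∫ x in a..b, f' x = f b - f a := by
  set h : ℕ → ℝ := fun n => 1 / (n + 1) with hh
  have hpos : ∀ n, 0 < h n := fun n => by positivity
  have hh0 : Tendsto h atTop (𝓝 0) := tendsto_one_div_add_atTop_nhds_zero_nat
  set g : ℕ → ℝ → ℝ := fun n x => (f (x + h n) - f x) / h n with hgdef
  have hint : ∀ u v : ℝ, IntervalIntegrable f volume u v :=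
    fun u v => hf.intervalIntegrable u v
  -- sequence limit for slopes
  have hseq : ∀ c : ℝ, Tendsto (fun n : ℕ => c + h n) atTop (𝓝[≠] c) := by
    intro c
    rw [tendsto_nhdsWithin_iff]
    constructor
    · simpa using tendsto_const_nhds.add hh0
    · exact Eventually.of_forall fun n => by
        simp only [Set.mem_compl_iff, Set.mem_singleton_iff]
        exact fun hc => (hpos n).ne' (by linarith)
  -- Step 2 : endpoint limits
  have step2 : ∀ c : ℝ, Tendsto (fun n => (∫ x in c..(c + h n), f x) / h n)
      atTop (𝓝 (f c)) := by
    intro c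
    have hF : HasDerivAt (fun u => ∫ x in c..u, f x) (f c) c :=
      intervalIntegral.integral_hasDerivAt_right (hint c c)
        (hf.stronglyMeasurableAtFilter _ _) hf.continuousAt
    have hslope := hasDerivAt_iff_tendsto_slope.1 hF
    have hcomp := hslope.comp (hseq c)
    have : ∀ n : ℕ, slope (fun u => ∫ x in c..u, f x) c (c + h n)
        = (∫ x in c..(c + h n), f x) / h n := by
      intro n
      rw [slope_def_field]
      simp [intervalIntegral.integral_same]
    refine Tendsto.congr (fun n => ?_) hcomp
    exact this n
  -- Step 1 : rewrite the integral of the difference quotient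
  have step1 : ∀ n, ∫ x in a..b, g n x
      = (∫ x in b..(b + h n), f x) / h n - (∫ x in a..(a + h n), f x) / h n := by
    intro n
    have e1 : ∫ x in a..b, g n x = (∫ x in a..b, (f (x + h n) - f x)) / h n := by
      rw [← intervalIntegral.integral_div]
    have e2 : ∫ x in a..b, (f (x + h n) - f x)
        = (∫ x in (a + h n)..(b + h n), f x) - ∫ x in a..b, f x := by
      have hcont2 : Continuous fun x : ℝ => f (x + h n) := hf.comp (continuous_add_right _)
      rw [intervalIntegral.integral_sub (hcont2.intervalIntegrable a b) (hint a b)]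
      congr 1
      exact intervalIntegral.integral_comp_add_right f (h n)
    have A := intervalIntegral.integral_add_adjacent_intervals
      (hint a (a + h n)) (hint (a + h n) (b + h n))
    have B := intervalIntegral.integral_add_adjacent_intervals
      (hint a b) (hint b (b + h n))
    rw [e1, e2]
    have : (∫ x in (a + h n)..(b + h n), f x) - ∫ x in a..b, f x
        = (∫ x in b..(b + h n), f x) - ∫ x in a..(a + h n), f x := by linarith
    rw [this, sub_div]
  -- Step 3 : dominated convergence
  have hKnn : 0 ≤ K := by
    by_contra hneg
    push_neg at hneg
    have h2 := hlip (a + 1) a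
    simp only [show a + 1 - a = (1:ℝ) by ring, abs_one, mul_one] at h2
    exact absurd (le_trans (abs_nonneg _) h2) (not_le.2 hneg)
  set μ := volume.restrict (Set.Ioc a b) with hμ
  have step3 : Tendsto (fun n => ∫ x, g n x ∂μ) atTop (𝓝 (∫ x, f' x ∂μ)) := by
    refine MeasureTheory.tendsto_integral_of_dominated_convergence (fun _ => K)
      (fun n => ?_) (MeasureTheory.integrable_const K) (fun n => ?_) ?_
    · exact (((hf.comp (continuous_add_right _)).sub hf).div_const _).aestronglyMeasurable
    · refine Eventually.of_forall fun x => ?_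
      have h1 := hlip (x + h n) x
      rw [Real.norm_eq_abs, hgdef]
      simp only
      rw [abs_div, abs_of_pos (hpos n)]
      rw [div_le_iff₀ (hpos n)]
      calc |f (x + h n) - f x| ≤ K * |x + h n - x| := h1
        _ = K * h n := by rw [show x + h n - x = h n by ring, abs_of_pos (hpos n)]
    · refine ae_restrict_of_ae (hd.mono fun x hx => ?_)
      have hslope := hasDerivAt_iff_tendsto_slope.1 hx
      have hcomp := hslope.comp (hseq x)
      have he : ∀ n : ℕ, slope f x (x + h n) = g n x := by
        intro n
        rw [slope_def_field, hgdef]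
        simp only
        rw [show x + h n - x = h n by ring]
      refine Tendsto.congr (fun n => ?_) hcomp
      exact he n
  -- combine
  have conv1 : Tendsto (fun n => ∫ x in a..b, g n x) atTop (𝓝 (f b - f a)) := by
    simp only [step1]
    exact (step2 b).sub (step2 a)
  have conv2 : Tendsto (fun n => ∫ x in a..b, g n x) atTop (𝓝 (∫ x in a..b, f' x)) := by
    have he : ∀ n, ∫ x in a..b, g n x = ∫ x, g n x ∂μ := fun n =>
      intervalIntegral.integral_of_le hab
    have he2 : ∫ x in a..b, f' x = ∫ x, f' x ∂μ := intervalIntegral.integral_of_le hab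
    rw [he2]
    simpa [he] using step3
  exact tendsto_nhds_unique conv2 conv1

/-- Continuity of the implicit inverse function. -/
lemma inv_continuous (τ : ℝ → ℝ) (c M₁ : ℝ)
    (hlip : ∀ x y, |τ x - τ y| ≤ M₁ * |x - y|) (hc : |c| * M₁ < 1)
    (Z : ℝ → ℝ) (hZ : ∀ z, Z z - c * τ (Z z) = z) : Continuous Z := by
  set g : ℝ → ℝ := fun y => y - c * τ y with hg
  have hmono : StrictMono g := by
    intro y y' hyy
    have h1 : |c * (τ y' - τ y)| ≤ |c| * (M₁ * |y' - y|) := by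
      rw [abs_mul]
      exact mul_le_mul_of_nonneg_left (hlip y' y) (abs_nonneg c)
    rw [abs_of_pos (by linarith : (0:ℝ) < y' - y)] at h1
    have h2 : c * (τ y' - τ y) ≤ |c * (τ y' - τ y)| := le_abs_self _
    have h3 : |c| * M₁ * (y' - y) ≤ 1 * (y' - y) := by nlinarith [abs_nonneg c]
    simp only [hg]
    nlinarith
  have hsurj : Function.Surjective g := fun z => ⟨Z z, hZ z⟩
  set iso := StrictMono.orderIsoOfSurjective g hmono hsurj with hiso
  have hZeq : Z = fun z => iso.symm z := by
    funext z
    symm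
    rw [OrderIso.symm_apply_eq]
    exact (hZ z).symm
  rw [hZeq]
  exact (OrderIso.continuous iso.symm)

lemma continuous_q : Continuous q :=
  Differentiable.continuous (fun x => (hasDerivAt_q x).differentiableAt)

lemma continuous_r : Continuous r :=
  Differentiable.continuous (fun x => (hasDerivAt_r x).differentiableAt)

lemma continuous_p : Continuous p :=
  Differentiable.continuous (fun x => (hasDerivAt_p x).differentiableAt)

lemma abs_deriv_le_of_lip {α : ℝ → ℝ} {K : NNReal} (h : LipschitzWith K α) {w d : ℝ}
    (hd : HasDerivAt α d w) : |d| ≤ K := by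
  have hslope := hasDerivAt_iff_tendsto_slope.1 hd
  have habs : Tendsto (fun y => |slope α w y|) (𝓝[≠] w) (𝓝 |d|) :=
    (continuous_abs.tendsto _).comp hslope
  refine le_of_tendsto habs ?_
  filter_upwards [self_mem_nhdsWithin] with y hy
  have hyw : y ≠ w := hy
  rw [slope_def_field, abs_div, div_le_iff₀ (abs_pos.2 (sub_ne_zero.2 hyw))]
  have h2 := h.dist_le_mul y w
  rw [Real.dist_eq, Real.dist_eq] at h2
  exact h2


/-- estimates for the fixed point `t = τ (h + c t)` -/
lemma inv_taylor (τ τd : ℝ → ℝ) (M M₁ M₂ : ℝ)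
    (hM : ∀ x, |τ x| ≤ M) (hM1nn : 0 ≤ M₁) (hM2nn : 0 ≤ M₂) (hMnn : 0 ≤ M)
    (hτlip : ∀ x y, |τ x - τ y| ≤ M₁ * |x - y|)
    (hτtay : ∀ a v, |τ (a + v) - τ a - v * τd a| ≤ M₂ * v ^ 2)
    (hM1b : ∀ x, |τd x| ≤ M₁)
    (c h t : ℝ) (ht : t = τ (h + c * t)) :
    |t - τ h| ≤ M₁ * (|c| * M) ∧
      |t - τ h - c * (τ h * τd h)| ≤ (M₂ * M ^ 2 + M₁ ^ 2 * M) * c ^ 2 := by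
  have htb : |t| ≤ M := by rw [ht]; exact hM _
  have h1 : |t - τ h| ≤ M₁ * |c * t| := by
    nth_rewrite 1 [ht]
    have := hτlip (h + c * t) h
    simpa using this
  have h2 : |c * t| ≤ |c| * M := by
    rw [abs_mul]
    exact mul_le_mul_of_nonneg_left htb (abs_nonneg c)
  have hfirst : |t - τ h| ≤ M₁ * (|c| * M) :=
    le_trans h1 (mul_le_mul_of_nonneg_left h2 hM1nn)
  refine ⟨hfirst, ?_⟩
  have t1 := hτtay h (c * t)
  rw [← ht] at t1
  -- t1 : |t - τ h - c * t * τd h| ≤ M₂ * (c * t) ^ 2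
  have t2 : |c * (t - τ h) * τd h| ≤ |c| * (M₁ * (|c| * M)) * M₁ := by
    rw [abs_mul, abs_mul]
    have b1 : |c| * |t - τ h| ≤ |c| * (M₁ * (|c| * M)) :=
      mul_le_mul_of_nonneg_left hfirst (abs_nonneg c)
    exact mul_le_mul (by exact b1) (hM1b h) (abs_nonneg _) (by positivity)
  have hdecomp : t - τ h - c * (τ h * τd h)
      = (t - τ h - c * t * τd h) + c * (t - τ h) * τd h := by ring
  rw [hdecomp]
  have htri := abs_add_le (t - τ h - c * t * τd h) (c * (t - τ h) * τd h)
  have hsq : (c * t) ^ 2 ≤ c ^ 2 * M ^ 2 := by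
    have : t ^ 2 ≤ M ^ 2 := by nlinarith [abs_nonneg t, sq_abs t]
    nlinarith [sq_nonneg c]
  have t1' : |t - τ h - c * t * τd h| ≤ M₂ * M ^ 2 * c ^ 2 :=
    le_trans t1 (by nlinarith [mul_le_mul_of_nonneg_left hsq hM2nn])
  have t2' : |c * (t - τ h) * τd h| ≤ M₁ ^ 2 * M * c ^ 2 := by
    refine le_trans t2 (le_of_eq ?_)
    rw [show c ^ 2 = |c| * |c| from by rw [abs_mul_abs_self c]; ring]
    ring
  linarith [htri]

/-- the pointwise second-order estimate -/
lemma pointwise_est (M M₁ cB cS K L A T T' tp tm d : ℝ)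
    (hMnn : 0 ≤ M) (hM1nn : 0 ≤ M₁) (hcBnn : 0 ≤ cB)
    (hcS : cS = 6 * M ^ 3 + 2 * cB + M₁ * M ^ 2)
    (hT : |T| ≤ M) (htp : |tp| ≤ M) (htm : |tm| ≤ M) (hT' : |T'| ≤ M₁)
    (htp1 : |tp - T| ≤ M₁ * (|L| / 2 * M)) (htm1 : |tm - T| ≤ M₁ * (|L| / 2 * M))
    (hBp : |tp - T - L / 2 * (T * T')| ≤ cB * L ^ 2)
    (hBm : |tm - T + L / 2 * (T * T')| ≤ cB * L ^ 2)
    (hd : |d| ≤ K) (hK : 0 ≤ K) :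
    |(p (A - L * tp) + p (A + L * tm) - 2 * p A) * (1 + d / 2)
        - L ^ 2 * (T ^ 2 * (1 + d) * r A)
        + L ^ 2 * (T * T' * (1 + d / 2) * q A + T ^ 2 / 2 * (r A * d))|
      ≤ cS * (1 + K / 2) * |L| ^ 3 := by
  have hL2 : |L| ^ 2 = L ^ 2 := sq_abs L
  have hqA : |q A| ≤ 1 := abs_q_le A
  have hrA : |r A| ≤ 1 := abs_r_le A
  -- p-Taylor for the first term
  have hP1 := p_taylor A (-(L * tp))
  rw [show A + -(L * tp) = A - L * tp by ring] at hP1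
  have e1 : p (A - L * tp) - p A - -(L * tp) * q A - (-(L * tp)) ^ 2 / 2 * r A
      = p (A - L * tp) - p A + L * tp * q A - L ^ 2 * tp ^ 2 / 2 * r A := by ring
  rw [e1] at hP1
  have hb1 : 3 * |(-(L * tp))| ^ 3 ≤ 3 * M ^ 3 * |L| ^ 3 := by
    rw [abs_neg, abs_mul]
    have h1 : (|L| * |tp|) ^ 3 ≤ (|L| * M) ^ 3 := by
      apply pow_le_pow_left₀ (by positivity)
      exact mul_le_mul_of_nonneg_left htp (abs_nonneg L)
    calc 3 * (|L| * |tp|) ^ 3 ≤ 3 * (|L| * M) ^ 3 := by linarith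
      _ = 3 * M ^ 3 * |L| ^ 3 := by ring
  have hP1' : |p (A - L * tp) - p A + L * tp * q A - L ^ 2 * tp ^ 2 / 2 * r A|
      ≤ 3 * M ^ 3 * |L| ^ 3 := le_trans hP1 hb1
  -- p-Taylor for the second term
  have hP2 := p_taylor A (L * tm)
  have e2 : p (A + L * tm) - p A - L * tm * q A - (L * tm) ^ 2 / 2 * r A
      = p (A + L * tm) - p A - L * tm * q A - L ^ 2 * tm ^ 2 / 2 * r A := by ring
  rw [e2] at hP2
  have hb2 : 3 * |L * tm| ^ 3 ≤ 3 * M ^ 3 * |L| ^ 3 := by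
    rw [abs_mul]
    have h1 : (|L| * |tm|) ^ 3 ≤ (|L| * M) ^ 3 := by
      apply pow_le_pow_left₀ (by positivity)
      exact mul_le_mul_of_nonneg_left htm (abs_nonneg L)
    calc 3 * (|L| * |tm|) ^ 3 ≤ 3 * (|L| * M) ^ 3 := by linarith
      _ = 3 * M ^ 3 * |L| ^ 3 := by ring
  have hP2' : |p (A + L * tm) - p A - L * tm * q A - L ^ 2 * tm ^ 2 / 2 * r A|
      ≤ 3 * M ^ 3 * |L| ^ 3 := le_trans hP2 hb2
  -- third term
  have ht3 : |tm - tp + L * (T * T')| ≤ 2 * cB * L ^ 2 := by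
    have e : tm - tp + L * (T * T')
        = (tm - T + L / 2 * (T * T')) - (tp - T - L / 2 * (T * T')) := by ring
    rw [e]
    exact le_trans (abs_sub _ _) (by linarith)
  have hthird : |L * ((tm - tp) + L * (T * T')) * q A| ≤ 2 * cB * |L| ^ 3 := by
    rw [abs_mul, abs_mul]
    have h1 : |L| * |tm - tp + L * (T * T')| ≤ |L| * (2 * cB * L ^ 2) :=
      mul_le_mul_of_nonneg_left ht3 (abs_nonneg L)
    have h2 : |L| * |tm - tp + L * (T * T')| * |q A| ≤ |L| * (2 * cB * L ^ 2) * 1 := by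
      apply mul_le_mul h1 hqA (abs_nonneg _) (by positivity)
    have h3 : |L| * (2 * cB * L ^ 2) * 1 = 2 * cB * |L| ^ 3 := by
      rw [← hL2]; ring
    linarith [h2, le_of_eq h3]
  -- fourth term
  have hsq : ∀ s : ℝ, |s| ≤ M → |s - T| ≤ M₁ * (|L| / 2 * M) → |s ^ 2 - T ^ 2| ≤ M₁ * M ^ 2 * |L| := by
    intro s hs hs1
    have e : s ^ 2 - T ^ 2 = (s - T) * (s + T) := by ring
    rw [e, abs_mul]
    have h1 : |s + T| ≤ 2 * M := le_trans (abs_add_le s T) (by linarith)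
    have := mul_le_mul hs1 h1 (abs_nonneg _) (by positivity)
    refine le_trans this (le_of_eq (by ring))
  have h4a := hsq tp htp htp1
  have h4b := hsq tm htm htm1
  have hfourth : |L ^ 2 * ((tp ^ 2 + tm ^ 2) / 2 - T ^ 2) * r A| ≤ M₁ * M ^ 2 * |L| ^ 3 := by
    rw [abs_mul, abs_mul]
    have hmid : |(tp ^ 2 + tm ^ 2) / 2 - T ^ 2| ≤ M₁ * M ^ 2 * |L| := by
      have e : (tp ^ 2 + tm ^ 2) / 2 - T ^ 2
          = ((tp ^ 2 - T ^ 2) + (tm ^ 2 - T ^ 2)) / 2 := by ring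
      rw [e, abs_div]
      rw [show |(2:ℝ)| = 2 by norm_num]
      have := abs_add_le (tp ^ 2 - T ^ 2) (tm ^ 2 - T ^ 2)
      linarith
    have hL2abs : |L ^ 2| = |L| ^ 2 := by rw [← hL2, abs_of_nonneg (by positivity)]
    rw [hL2abs]
    have h1 : |L| ^ 2 * |(tp ^ 2 + tm ^ 2) / 2 - T ^ 2| ≤ |L| ^ 2 * (M₁ * M ^ 2 * |L|) :=
      mul_le_mul_of_nonneg_left hmid (by positivity)
    have h2 : |L| ^ 2 * |(tp ^ 2 + tm ^ 2) / 2 - T ^ 2| * |r A|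
        ≤ |L| ^ 2 * (M₁ * M ^ 2 * |L|) * 1 :=
      mul_le_mul h1 hrA (abs_nonneg _) (by positivity)
    refine le_trans h2 (le_of_eq (by ring))
  -- error term bound
  set err : ℝ := (p (A - L * tp) + p (A + L * tm) - 2 * p A)
      - L ^ 2 * (T ^ 2 * r A - T * T' * q A) with herr
  have hdecomp : err = (p (A - L * tp) - p A + L * tp * q A - L ^ 2 * tp ^ 2 / 2 * r A)
      + (p (A + L * tm) - p A - L * tm * q A - L ^ 2 * tm ^ 2 / 2 * r A)
      + L * ((tm - tp) + L * (T * T')) * q A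
      + L ^ 2 * ((tp ^ 2 + tm ^ 2) / 2 - T ^ 2) * r A := by rw [herr]; ring
  have herrb : |err| ≤ cS * |L| ^ 3 := by
    rw [hdecomp]
    have tri1 := abs_add_le ((p (A - L * tp) - p A + L * tp * q A - L ^ 2 * tp ^ 2 / 2 * r A)
      + (p (A + L * tm) - p A - L * tm * q A - L ^ 2 * tm ^ 2 / 2 * r A)
      + L * ((tm - tp) + L * (T * T')) * q A)
      (L ^ 2 * ((tp ^ 2 + tm ^ 2) / 2 - T ^ 2) * r A)
    have tri2 := abs_add_le ((p (A - L * tp) - p A + L * tp * q A - L ^ 2 * tp ^ 2 / 2 * r A)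
      + (p (A + L * tm) - p A - L * tm * q A - L ^ 2 * tm ^ 2 / 2 * r A))
      (L * ((tm - tp) + L * (T * T')) * q A)
    have tri3 := abs_add_le (p (A - L * tp) - p A + L * tp * q A - L ^ 2 * tp ^ 2 / 2 * r A)
      (p (A + L * tm) - p A - L * tm * q A - L ^ 2 * tm ^ 2 / 2 * r A)
    rw [hcS]
    linarith
  -- final identity
  have hfin : (p (A - L * tp) + p (A + L * tm) - 2 * p A) * (1 + d / 2)
      - L ^ 2 * (T ^ 2 * (1 + d) * r A)
      + L ^ 2 * (T * T' * (1 + d / 2) * q A + T ^ 2 / 2 * (r A * d))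
      = err * (1 + d / 2) := by rw [herr]; ring
  rw [hfin, abs_mul]
  have hone : |1 + d / 2| ≤ 1 + K / 2 := by
    have := abs_add_le 1 (d / 2)
    rw [abs_div] at this
    rw [show |(2:ℝ)| = 2 by norm_num] at this
    simp only [abs_one] at this
    linarith
  have hcSnn : 0 ≤ cS := by
    rw [hcS]; positivity
  have hfin2 := mul_le_mul herrb hone (abs_nonneg _)
    (mul_nonneg hcSnn (by positivity))
  refine le_trans hfin2 (le_of_eq (by ring))

end SV

open SV

/-- second-variation estimate for the area of a deformed graphical strip.
Here `η(w) = w + α(w)/2`, `Z₊` and `Z₋` are the inverse functions of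
`z ↦ z − (λ/2)τ(z)` and `z ↦ z + (λ/2)τ(z)`, and `δ₊, δ₋` are the slopes of the
rulings of the deformed surfaces. -/
theorem second_variation_estimate
    (α α' : ℝ → ℝ) (Kα : NNReal) (hαLip : LipschitzWith Kα α)
    (hmono : ∀ a b : ℝ, a < b → α b - α a ≥ -2 * (b - a))
    (hα' : ∀ᵐ w : ℝ ∂volume, HasDerivAt α (α' w) w) (hα'm : Measurable α')
    (w₁ w₂ : ℝ) (hw : w₁ < w₂)
    (τ : ℝ → ℝ) (hτ : ContDiff ℝ (⊤ : ℕ∞) τ) (hτc : HasCompactSupport τ)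
    (hsupp : tsupport τ ⊆ Set.Icc (w₁ + α w₁ / 2) (w₂ + α w₂ / 2)) :
    ∃ C : ℝ, 0 < C ∧ ∀ lam : ℝ, |lam| < 1 / C →
      ∀ Zp Zm : ℝ → ℝ,
        (∀ z : ℝ, Zp z - lam / 2 * τ (Zp z) = z) →
        (∀ z : ℝ, Zm z + lam / 2 * τ (Zm z) = z) →
        |(∫ w in w₁..w₂,
              (Real.sqrt (1 + (α w - lam * τ (Zp (w + α w / 2))) ^ 2)
                + Real.sqrt (1 + (α w + lam * τ (Zm (w + α w / 2))) ^ 2)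
                - 2 * Real.sqrt (1 + (α w) ^ 2)) * (1 + α' w / 2))
            - lam ^ 2 * ∫ w in w₁..w₂,
                τ (w + α w / 2) ^ 2 * (1 + α' w) * (1 + (α w) ^ 2) ^ (-(3 : ℝ) / 2)|
          ≤ C * (w₂ - w₁) * |lam| ^ 3 := by
  -- derivatives of τ
  have hτd : Differentiable ℝ τ := hτ.differentiable (by simp)
  have hτ1 : ∀ y, HasDerivAt τ (deriv τ y) y := fun y => (hτd y).hasDerivAt
  have hτi : ContDiff ℝ ((⊤:ℕ∞) : WithTop ℕ∞) τ := hτ.of_le (by simp)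
  have hτ1smooth : ContDiff ℝ ((⊤:ℕ∞) : WithTop ℕ∞) (deriv τ) :=
    (contDiff_infty_iff_deriv.1 hτi).2
  have hτ1d : Differentiable ℝ (deriv τ) := (contDiff_infty_iff_deriv.1 hτ1smooth).1
  have hτ2 : ∀ y, HasDerivAt (deriv τ) (deriv (deriv τ) y) y := fun y => (hτ1d y).hasDerivAt
  have hτ1c : Continuous (deriv τ) := hτ1d.continuous
  have hτ2c : Continuous (deriv (deriv τ)) :=
    ((contDiff_infty_iff_deriv.1 hτ1smooth).2).continuous
  -- bounds
  obtain ⟨M, hM0⟩ := hτ.continuous.bounded_above_of_compact_support hτc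
  obtain ⟨M₁, hM10⟩ := hτ1c.bounded_above_of_compact_support hτc.deriv
  obtain ⟨M₂, hM20⟩ := hτ2c.bounded_above_of_compact_support hτc.deriv.deriv
  have hM : ∀ x, |τ x| ≤ M := fun x => by simpa using hM0 x
  have hM1 : ∀ x, |deriv τ x| ≤ M₁ := fun x => by simpa using hM10 x
  have hM2 : ∀ x, |deriv (deriv τ) x| ≤ M₂ := fun x => by simpa using hM20 x
  have hMnn : 0 ≤ M := le_trans (abs_nonneg _) (hM 0)
  have hM1nn : 0 ≤ M₁ := le_trans (abs_nonneg _) (hM1 0)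
  have hM2nn : 0 ≤ M₂ := le_trans (abs_nonneg _) (hM2 0)
  have hτlip : ∀ x y, |τ x - τ y| ≤ M₁ * |x - y| := mvt_bound τ (deriv τ) hτ1 M₁ hM1
  have hτ1lip : ∀ x y, |deriv τ x - deriv τ y| ≤ M₂ * |x - y| :=
    mvt_bound (deriv τ) (deriv (deriv τ)) hτ2 M₂ hM2
  have hτtay : ∀ a v, |τ (a + v) - τ a - v * deriv τ a| ≤ M₂ * v ^ 2 :=
    taylor2 τ (deriv τ) hτ1 M₂ hτ1lip
  -- α facts
  set K : ℝ := (Kα : ℝ) with hKdef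
  have hKnn : (0:ℝ) ≤ K := Kα.coe_nonneg
  have hαc : Continuous α := hαLip.continuous
  have hαlip : ∀ x y, |α x - α y| ≤ K * |x - y| := by
    intro x y
    have := hαLip.dist_le_mul x y
    rwa [Real.dist_eq, Real.dist_eq] at this
  have habs : ∀ᵐ w : ℝ ∂volume, |α' w| ≤ K :=
    hα'.mono fun w hd => abs_deriv_le_of_lip hαLip hd
  -- constants
  set cB : ℝ := M₂ * M ^ 2 / 4 + M₁ ^ 2 * M / 4 with hcB
  set cS : ℝ := 6 * M ^ 3 + 2 * cB + M₁ * M ^ 2 with hcS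
  set c₄ : ℝ := cS * (1 + K / 2) with hc₄
  have hcBnn : 0 ≤ cB := by positivity
  have hcSnn : 0 ≤ cS := by positivity
  have hc₄nn : 0 ≤ c₄ := by positivity
  refine ⟨c₄ + M₁ + 1, by positivity, ?_⟩
  set C : ℝ := c₄ + M₁ + 1 with hCdef
  have hCpos : 0 < C := by positivity
  intro lam hlam Zp Zm hZp hZm
  have hlamC : |lam| * C < 1 := by
    rw [lt_div_iff₀ hCpos] at hlam
    exact hlam
  have hlamM₁ : |lam / 2| * M₁ < 1 := by
    have h1 : |lam / 2| = |lam| / 2 := by rw [abs_div]; norm_num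
    have h2 : |lam| * M₁ ≤ |lam| * C := by
      apply mul_le_mul_of_nonneg_left _ (abs_nonneg lam)
      rw [hCdef]; linarith
    nlinarith [abs_nonneg lam]
  -- continuity of the inverses
  have hZpc : Continuous Zp :=
    inv_continuous τ (lam / 2) M₁ hτlip hlamM₁ Zp hZp
  have hZmc : Continuous Zm := by
    refine inv_continuous τ (-(lam / 2)) M₁ hτlip (by rwa [abs_neg]) Zm (fun z => ?_)
    have := hZm z
    ring_nf
    ring_nf at this ⊢
    linarith
  have hηc : Continuous (fun w : ℝ => w + α w / 2) := continuous_id.add (hαc.div_const 2)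
  -- endpoint vanishing of τ ∘ η
  have hTw₁ : τ (w₁ + α w₁ / 2) = 0 := by
    have hev : ∀ᶠ x in 𝓝[<] (w₁ + α w₁ / 2), τ x = 0 := by
      filter_upwards [self_mem_nhdsWithin] with x hx
      refine image_eq_zero_of_notMem_tsupport fun hmem => ?_
      exact absurd (hsupp hmem).1 (not_le.2 hx)
    have h1 : Tendsto τ (𝓝[<] (w₁ + α w₁ / 2)) (𝓝 (τ (w₁ + α w₁ / 2))) :=
      (hτ.continuous.continuousWithinAt)
    have h2 : Tendsto τ (𝓝[<] (w₁ + α w₁ / 2)) (𝓝 0) :=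
      Tendsto.congr' (hev.mono fun x hx => hx.symm) tendsto_const_nhds
    exact tendsto_nhds_unique h1 h2
  have hTw₂ : τ (w₂ + α w₂ / 2) = 0 := by
    have hev : ∀ᶠ x in 𝓝[>] (w₂ + α w₂ / 2), τ x = 0 := by
      filter_upwards [self_mem_nhdsWithin] with x hx
      refine image_eq_zero_of_notMem_tsupport fun hmem => ?_
      exact absurd (hsupp hmem).2 (not_le.2 hx)
    have h1 : Tendsto τ (𝓝[>] (w₂ + α w₂ / 2)) (𝓝 (τ (w₂ + α w₂ / 2))) :=
      (hτ.continuous.continuousWithinAt)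
    have h2 : Tendsto τ (𝓝[>] (w₂ + α w₂ / 2)) (𝓝 0) :=
      Tendsto.congr' (hev.mono fun x hx => hx.symm) tendsto_const_nhds
    exact tendsto_nhds_unique h1 h2
  -- the relevant functions
  set I1f : ℝ → ℝ := fun w => (p (α w - lam * τ (Zp (w + α w / 2)))
      + p (α w + lam * τ (Zm (w + α w / 2))) - 2 * p (α w)) * (1 + α' w / 2) with hI1fdef
  set I2f : ℝ → ℝ := fun w => τ (w + α w / 2) ^ 2 * (1 + α' w) * r (α w) with hI2fdef
  set Φf : ℝ → ℝ := fun w => τ (w + α w / 2) ^ 2 / 2 * q (α w) with hΦfdef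
  set Pf : ℝ → ℝ := fun w => τ (w + α w / 2) * deriv τ (w + α w / 2) * (1 + α' w / 2) * q (α w)
      + τ (w + α w / 2) ^ 2 / 2 * (r (α w) * α' w) with hPfdef
  set Ef : ℝ → ℝ := fun w => I1f w - lam ^ 2 * I2f w + lam ^ 2 * Pf w with hEfdef
  -- the pointwise estimate
  have key : ∀ w : ℝ, |α' w| ≤ K → |Ef w| ≤ c₄ * |lam| ^ 3 := by
    intro w hKw
    have hZpw := hZp (w + α w / 2)
    have hZmw := hZm (w + α w / 2)
    have f1 : Zp (w + α w / 2) = (w + α w / 2) + lam / 2 * τ (Zp (w + α w / 2)) := by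
      linarith
    have f1m : Zm (w + α w / 2) = (w + α w / 2) + -(lam / 2) * τ (Zm (w + α w / 2)) := by
      have e : (w + α w / 2) + -(lam / 2) * τ (Zm (w + α w / 2))
          = (w + α w / 2) - lam / 2 * τ (Zm (w + α w / 2)) := by ring
      rw [e]; linarith
    have htp_eq : τ (Zp (w + α w / 2))
        = τ ((w + α w / 2) + lam / 2 * τ (Zp (w + α w / 2))) := by
      conv_lhs => rw [f1]
    have htm_eq : τ (Zm (w + α w / 2))
        = τ ((w + α w / 2) + -(lam / 2) * τ (Zm (w + α w / 2))) := by
      conv_lhs => rw [f1m]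
    have hITp := inv_taylor τ (deriv τ) M M₁ M₂ hM hM1nn hM2nn hMnn hτlip hτtay hM1
      (lam / 2) (w + α w / 2) (τ (Zp (w + α w / 2))) htp_eq
    have hITm := inv_taylor τ (deriv τ) M M₁ M₂ hM hM1nn hM2nn hMnn hτlip hτtay hM1
      (-(lam / 2)) (w + α w / 2) (τ (Zm (w + α w / 2))) htm_eq
    have habs2 : |lam / 2| = |lam| / 2 := by rw [abs_div]; norm_num
    have htp1 : |τ (Zp (w + α w / 2)) - τ (w + α w / 2)| ≤ M₁ * (|lam| / 2 * M) := by
      have := hITp.1; rwa [habs2] at this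
    have htm1 : |τ (Zm (w + α w / 2)) - τ (w + α w / 2)| ≤ M₁ * (|lam| / 2 * M) := by
      have := hITm.1; rwa [abs_neg, habs2] at this
    have hBp : |τ (Zp (w + α w / 2)) - τ (w + α w / 2)
        - lam / 2 * (τ (w + α w / 2) * deriv τ (w + α w / 2))| ≤ cB * lam ^ 2 := by
      refine le_trans hITp.2 (le_of_eq ?_)
      rw [hcB]; ring
    have hBm : |τ (Zm (w + α w / 2)) - τ (w + α w / 2)
        + lam / 2 * (τ (w + α w / 2) * deriv τ (w + α w / 2))| ≤ cB * lam ^ 2 := by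
      have h2 := hITm.2
      have e : τ (Zm (w + α w / 2)) - τ (w + α w / 2)
          - -(lam / 2) * (τ (w + α w / 2) * deriv τ (w + α w / 2))
          = τ (Zm (w + α w / 2)) - τ (w + α w / 2)
          + lam / 2 * (τ (w + α w / 2) * deriv τ (w + α w / 2)) := by ring
      rw [e] at h2
      refine le_trans h2 (le_of_eq ?_)
      rw [hcB]; ring
    have hpe := pointwise_est M M₁ cB cS K lam (α w) (τ (w + α w / 2))
      (deriv τ (w + α w / 2)) (τ (Zp (w + α w / 2))) (τ (Zm (w + α w / 2))) (α' w)
      hMnn hM1nn hcBnn hcS (hM _) (hM _) (hM _) (hM1 _) htp1 htm1 hBp hBm hKw hKnn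
    have hEw : Ef w = (p (α w - lam * τ (Zp (w + α w / 2)))
        + p (α w + lam * τ (Zm (w + α w / 2))) - 2 * p (α w)) * (1 + α' w / 2)
        - lam ^ 2 * (τ (w + α w / 2) ^ 2 * (1 + α' w) * r (α w))
        + lam ^ 2 * (τ (w + α w / 2) * deriv τ (w + α w / 2) * (1 + α' w / 2) * q (α w)
            + τ (w + α w / 2) ^ 2 / 2 * (r (α w) * α' w)) := by
      rw [hEfdef]
    rw [hEw]
    refine le_trans hpe (le_of_eq ?_)
    rw [hc₄]
  -- measurability
  have hcont_T : Continuous (fun w : ℝ => τ (w + α w / 2)) := hτ.continuous.comp hηc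
  have hcont_T1 : Continuous (fun w : ℝ => deriv τ (w + α w / 2)) := hτ1c.comp hηc
  have hcont_tp : Continuous (fun w : ℝ => τ (Zp (w + α w / 2))) :=
    hτ.continuous.comp (hZpc.comp hηc)
  have hcont_tm : Continuous (fun w : ℝ => τ (Zm (w + α w / 2))) :=
    hτ.continuous.comp (hZmc.comp hηc)
  have hα'm2 : Measurable (fun w => 1 + α' w / 2) := (hα'm.div_const 2).const_add 1
  set μ := volume.restrict (Set.Ioc w₁ w₂) with hμdef
  have hI1m : AEStronglyMeasurable I1f μ := by
    rw [hI1fdef]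
    refine Measurable.aestronglyMeasurable (Measurable.mul ?_ hα'm2)
    exact (((continuous_p.comp (hαc.sub (continuous_const.mul hcont_tp))).add
      (continuous_p.comp (hαc.add (continuous_const.mul hcont_tm)))).sub
      (continuous_const.mul (continuous_p.comp hαc))).measurable
  have hI2m : AEStronglyMeasurable I2f μ := by
    rw [hI2fdef]
    exact Measurable.aestronglyMeasurable
      (((hcont_T.pow 2).measurable.mul (hα'm.const_add 1)).mul
        (continuous_r.comp hαc).measurable)
  have hPm : AEStronglyMeasurable Pf μ := by
    rw [hPfdef]
    refine Measurable.aestronglyMeasurable (Measurable.add ?_ ?_)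
    · exact (((hcont_T.mul hcont_T1).measurable.mul hα'm2).mul
        (continuous_q.comp hαc).measurable)
    · exact ((hcont_T.pow 2).div_const 2).measurable.mul
        ((continuous_r.comp hαc).measurable.mul hα'm)
  have hEm : AEStronglyMeasurable Ef μ := by
    rw [hEfdef]
    exact (hI1m.sub (hI2m.const_mul _)).add (hPm.const_mul _)
  -- integrability
  have hfin : volume (Set.Ioc w₁ w₂) < ⊤ := measure_Ioc_lt_top
  have habs_res : ∀ᵐ w ∂μ, |α' w| ≤ K := ae_restrict_of_ae habs
  have mk_int : ∀ (F : ℝ → ℝ) (B : ℝ), AEStronglyMeasurable F μ →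
      (∀ w, |α' w| ≤ K → |F w| ≤ B) → IntervalIntegrable F volume w₁ w₂ := by
    intro F B hm hb
    rw [intervalIntegrable_iff_integrableOn_Ioc_of_le hw.le]
    refine Integrable.mono' (g := fun _ => B) (integrableOn_const hfin.ne) hm ?_
    exact habs_res.mono fun w h => by simpa [Real.norm_eq_abs] using hb w h
  have hone_ae : ∀ w : ℝ, |α' w| ≤ K → |1 + α' w / 2| ≤ 1 + K / 2 := by
    intro w h
    have h1 := abs_add_le (1 : ℝ) (α' w / 2)
    rw [abs_div, show |(2:ℝ)| = 2 by norm_num, abs_one] at h1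
    linarith
  have hbI2 : ∀ w, |α' w| ≤ K → |I2f w| ≤ M ^ 2 * (1 + K) := by
    intro w h
    rw [hI2fdef]
    simp only
    rw [abs_mul, abs_mul]
    have h1 : |τ (w + α w / 2) ^ 2| ≤ M ^ 2 := by
      rw [abs_pow]; exact pow_le_pow_left₀ (abs_nonneg _) (hM _) 2
    have h2 : |1 + α' w| ≤ 1 + K :=
      le_trans (abs_add_le 1 (α' w)) (by rw [abs_one]; linarith)
    have h3 := abs_r_le (α w)
    have := mul_le_mul (mul_le_mul h1 h2 (abs_nonneg _) (by positivity))
      h3 (abs_nonneg _) (by positivity)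
    refine le_trans this (le_of_eq (by ring))
  have hbP : ∀ w, |α' w| ≤ K → |Pf w| ≤ M * M₁ * (1 + K / 2) + M ^ 2 / 2 * K := by
    intro w h
    rw [hPfdef]
    simp only
    refine le_trans (abs_add_le _ _) ?_
    have hx1 : |τ (w + α w / 2) * deriv τ (w + α w / 2) * (1 + α' w / 2) * q (α w)|
        ≤ M * M₁ * (1 + K / 2) := by
      rw [abs_mul, abs_mul, abs_mul]
      have b1 : |τ (w + α w / 2)| * |deriv τ (w + α w / 2)| ≤ M * M₁ :=
        mul_le_mul (hM _) (hM1 _) (abs_nonneg _) hMnn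
      have b2 : |τ (w + α w / 2)| * |deriv τ (w + α w / 2)| * |1 + α' w / 2|
          ≤ M * M₁ * (1 + K / 2) :=
        mul_le_mul b1 (hone_ae w h) (abs_nonneg _) (by positivity)
      have b3 := mul_le_mul b2 (abs_q_le (α w)) (abs_nonneg _) (by positivity)
      refine le_trans b3 (le_of_eq (by ring))
    have hx2 : |τ (w + α w / 2) ^ 2 / 2 * (r (α w) * α' w)| ≤ M ^ 2 / 2 * K := by
      rw [abs_mul, abs_mul]
      have b1 : |τ (w + α w / 2) ^ 2 / 2| ≤ M ^ 2 / 2 := by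
        rw [abs_div, show |(2:ℝ)| = 2 by norm_num, abs_pow]
        have : |τ (w + α w / 2)| ^ 2 ≤ M ^ 2 := pow_le_pow_left₀ (abs_nonneg _) (hM _) 2
        linarith
      have b2 : |r (α w)| * |α' w| ≤ 1 * K :=
        mul_le_mul (abs_r_le _) h (abs_nonneg _) zero_le_one
      have b3 := mul_le_mul b1 (by linarith [b2] : |r (α w)| * |α' w| ≤ K)
        (by positivity) (by positivity)
      exact b3
    linarith
  have hI2int := mk_int I2f _ hI2m hbI2
  have hPint := mk_int Pf _ hPm hbP
  have hEint := mk_int Ef _ hEm key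
  -- Lipschitz bound for Φf
  have hηlip : ∀ x y : ℝ, |(x + α x / 2) - (y + α y / 2)| ≤ (1 + K / 2) * |x - y| := by
    intro x y
    have h1 := hαlip x y
    calc |(x + α x / 2) - (y + α y / 2)| = |(x - y) + (α x - α y) / 2| := by ring_nf
      _ ≤ |x - y| + |(α x - α y) / 2| := abs_add_le _ _
      _ = |x - y| + |α x - α y| / 2 := by
          rw [abs_div, show |(2:ℝ)| = 2 by norm_num]
      _ ≤ |x - y| + K * |x - y| / 2 := by linarith
      _ = (1 + K / 2) * |x - y| := by ring
  have hTlip : ∀ x y : ℝ, |τ (x + α x / 2) - τ (y + α y / 2)|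
      ≤ M₁ * (1 + K / 2) * |x - y| := by
    intro x y
    refine le_trans (hτlip _ _) ?_
    refine le_trans (mul_le_mul_of_nonneg_left (hηlip x y) hM1nn) (le_of_eq (by ring))
  set KΦ : ℝ := M ^ 2 / 2 * K + M * (M₁ * (1 + K / 2)) with hKΦdef
  have hΦlip : ∀ x y : ℝ, |Φf x - Φf y| ≤ KΦ * |x - y| := by
    intro x y
    have e : Φf x - Φf y = τ (x + α x / 2) ^ 2 / 2 * (q (α x) - q (α y))
        + (τ (x + α x / 2) ^ 2 - τ (y + α y / 2) ^ 2) / 2 * q (α y) := by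
      rw [hΦfdef]; simp only; ring
    rw [e]
    refine le_trans (abs_add_le _ _) ?_
    have hx1 : |τ (x + α x / 2) ^ 2 / 2 * (q (α x) - q (α y))| ≤ M ^ 2 / 2 * (K * |x - y|) := by
      rw [abs_mul]
      have b1 : |τ (x + α x / 2) ^ 2 / 2| ≤ M ^ 2 / 2 := by
        rw [abs_div, show |(2:ℝ)| = 2 by norm_num, abs_pow]
        have : |τ (x + α x / 2)| ^ 2 ≤ M ^ 2 := pow_le_pow_left₀ (abs_nonneg _) (hM _) 2
        linarith
      have b2 : |q (α x) - q (α y)| ≤ K * |x - y| := by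
        refine le_trans (q_lip (α x) (α y)) ?_
        rw [one_mul]; exact hαlip x y
      exact mul_le_mul b1 b2 (abs_nonneg _) (by positivity)
    have hx2 : |(τ (x + α x / 2) ^ 2 - τ (y + α y / 2) ^ 2) / 2 * q (α y)|
        ≤ M * (M₁ * (1 + K / 2)) * |x - y| := by
      rw [abs_mul]
      have b1 : |(τ (x + α x / 2) ^ 2 - τ (y + α y / 2) ^ 2) / 2|
          ≤ M * (M₁ * (1 + K / 2) * |x - y|) := by
        rw [abs_div, show |(2:ℝ)| = 2 by norm_num]
        rw [show τ (x + α x / 2) ^ 2 - τ (y + α y / 2) ^ 2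
            = (τ (x + α x / 2) - τ (y + α y / 2)) * (τ (x + α x / 2) + τ (y + α y / 2)) by ring]
        rw [abs_mul]
        have b2 : |τ (x + α x / 2) + τ (y + α y / 2)| ≤ 2 * M :=
          le_trans (abs_add_le _ _) (by linarith [hM (x + α x / 2), hM (y + α y / 2)])
        have b3 := mul_le_mul (hTlip x y) b2 (abs_nonneg _) (by positivity)
        refine le_trans (by linarith [b3] : |τ (x + α x / 2) - τ (y + α y / 2)|
          * |τ (x + α x / 2) + τ (y + α y / 2)| / 2 ≤ M₁ * (1 + K / 2) * |x - y| * (2 * M) / 2)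
          (le_of_eq (by ring))
      have b4 := mul_le_mul b1 (abs_q_le (α y)) (abs_nonneg _) (by positivity)
      refine le_trans b4 (le_of_eq (by ring))
    refine le_trans (add_le_add hx1 hx2) (le_of_eq ?_)
    rw [hKΦdef]; ring
  have hΦcont : Continuous Φf := by
    rw [hΦfdef]
    exact ((hcont_T.pow 2).div_const 2).mul (continuous_q.comp hαc)
  -- a.e. derivative of Φf
  have hΦderiv : ∀ᵐ w : ℝ ∂volume, HasDerivAt Φf (Pf w) w := by
    refine hα'.mono fun w hdw => ?_
    have hηd : HasDerivAt (fun u : ℝ => u + α u / 2) (1 + α' w / 2) w :=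
      (hasDerivAt_id w).add (hdw.div_const 2)
    have hTd : HasDerivAt (fun u : ℝ => τ (u + α u / 2))
        (deriv τ (w + α w / 2) * (1 + α' w / 2)) w := (hτ1 _).comp w hηd
    have hT2d : HasDerivAt (fun u : ℝ => τ (u + α u / 2) ^ 2 / 2)
        (τ (w + α w / 2) * (deriv τ (w + α w / 2) * (1 + α' w / 2))) w := by
      have h0 := (hTd.pow 2).div_const 2
      refine h0.congr_deriv (Eq.symm ?_)
      push_cast
      ring
    have hqd : HasDerivAt (fun u : ℝ => q (α u)) (r (α w) * α' w) w :=
      (hasDerivAt_q (α w)).comp w hdw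
    have h1 := hT2d.mul hqd
    rw [hΦfdef, hPfdef]
    refine h1.congr_deriv ?_
    beta_reduce
    ring
  -- FTC: the derivative integral vanishes
  have hint0 : ∫ w in w₁..w₂, Pf w = 0 := by
    rw [lip_ftc Φf Pf KΦ hΦcont hΦlip hΦderiv w₁ w₂ hw.le]
    rw [hΦfdef]
    simp only
    rw [hTw₁, hTw₂]
    ring
  -- split the integrals
  have hsplit : (∫ w in w₁..w₂, I1f w) - lam ^ 2 * ∫ w in w₁..w₂, I2f w
      = ∫ w in w₁..w₂, Ef w := by
    have e : I1f = fun w => Ef w + lam ^ 2 * I2f w - lam ^ 2 * Pf w := by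
      funext w; rw [hEfdef]; simp only; ring
    rw [e]
    rw [intervalIntegral.integral_sub (hEint.add (hI2int.const_mul _)) (hPint.const_mul _),
        intervalIntegral.integral_add hEint (hI2int.const_mul _),
        intervalIntegral.integral_const_mul, intervalIntegral.integral_const_mul, hint0]
    ring
  -- final bound
  have hEb2 : |∫ w in w₁..w₂, Ef w| ≤ c₄ * |lam| ^ 3 * (w₂ - w₁) := by
    have hle := intervalIntegral.norm_integral_le_of_norm_le (a := w₁) (b := w₂)
      (μ := volume) (f := Ef) (g := fun _ => c₄ * |lam| ^ 3) hw.le ?_ intervalIntegrable_const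
    · rw [Real.norm_eq_abs] at hle
      refine le_trans hle ?_
      rw [intervalIntegral.integral_const, smul_eq_mul]
      exact le_of_eq (by ring)
    · exact habs.mono fun w h _ => by simpa [Real.norm_eq_abs] using key w h
  have hfinal : |(∫ w in w₁..w₂, I1f w) - lam ^ 2 * ∫ w in w₁..w₂, I2f w|
      ≤ C * (w₂ - w₁) * |lam| ^ 3 := by
    rw [hsplit]
    refine le_trans hEb2 ?_
    have h1 : c₄ ≤ C := by rw [hCdef]; linarith
    have h2 : 0 ≤ (w₂ - w₁) * |lam| ^ 3 := mul_nonneg (by linarith) (by positivity)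
    nlinarith [mul_nonneg (sub_nonneg.2 h1) h2]
  simp only [hI1fdef, hI2fdef, SV.p, SV.r] at hfinal
  exact hfinal
end
end

section
/- Let ε > 0 and let f : {(x,0,z) : |x| ≤ 1+ε, z ∈ ℝ} → ℝ be continuous such that Γ_f is a union of horizontal segments, each having one endpoint with x-coordinate −(1+ε) and the other endpoint with x-coordinate 1+ε, and each intersecting the z-axis {(0,0,z) : z ∈ ℝ}. Define α̂ : ℝ → ℝ by α̂(w) = f(1,0,w). Then for all s < t: −2(t − s) ≤ α̂(t) − α̂(s) ≤ (ε + ε²/2)^{−1}·(t − s). In particular α̂ is Lipschitz. -/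
/-!
A horizontal line through a point `(0, 0, c)` of the `z`-axis is `x ↦ (x, a x, c)`. So the ruling of
`Γ_f` through the point above `(1, 0, w)` has `a = α̂(w)`, `c = w + α̂(w)/2`, and projects to the
parabola `x ↦ (x, 0, w + α̂(w)(1 - x²)/2)` in `V₀`, along which `f = α̂(w) x`. Since `Γ_f` is an
intrinsic graph, the parabolas of `s < t` cannot meet for `0 < |x| ≤ 1 + ε` (that would force
`α̂(s) = α̂(t)` and then `s = t`). The difference of their heights is affine in `u = x²` and equals
`t - s > 0` at `u = 1`; having no zero on `(0, (1 + ε)²]`, it is `≥ 0` at `u = 0` and `> 0` at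
`u = (1 + ε)²`, which are the two bounds.
-/

open MeasureTheory Filter

noncomputable section

open Set

lemma mem_IGraph_iff {D : Set H} {f : H → ℝ} {p : H} :
    p ∈ IGraph D f ↔ Proj p ∈ D ∧ f (Proj p) = p.2.1 := by
  obtain ⟨x, y, z⟩ := p
  constructor
  · rintro ⟨x', z', hD, hp⟩
    simp only [Prod.mk.injEq] at hp
    obtain ⟨rfl, rfl, rfl⟩ := hp
    have hz : z' + x * f (x, 0, z') / 2 - x * f (x, 0, z') / 2 = z' := by ring
    simpa [Proj, hz] using hD
  · rintro ⟨hD, hf⟩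
    simp only [Proj] at hD hf
    exact ⟨x, z - x * y / 2, hD, by simp [hf]⟩

lemma eq_of_mem_IGraph_of_Proj_eq {D : Set H} {f : H → ℝ} {p p' : H}
    (hp : p ∈ IGraph D f) (hp' : p' ∈ IGraph D f) (h : Proj p = Proj p') : p = p' := by
  have hy : p.2.1 = p'.2.1 := by
    rw [← (mem_IGraph_iff.1 hp).2, ← (mem_IGraph_iff.1 hp').2, h]
  have hx : p.1 = p'.1 := (congrArg Prod.fst h :)
  have hz : p.2.2 - p.1 * p.2.1 / 2 = p'.2.2 - p'.1 * p'.2.1 / 2 :=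
    congrArg (fun q : H => q.2.2) h
  refine Prod.ext hx (Prod.ext hy ?_)
  rw [hx, hy] at hz
  linarith

/-- Meeting the `z`-axis forces the segment to be centred there, and horizontality then makes `z`
constant along it. -/
lemma segment_eq_image_of_horizontal {L : ℝ} (hL : 0 < L) {q r : H}
    (hq : q.1 = -L) (hr : r.1 = L) (hhor : (Hmul (Hinv q) r).2.2 = 0)
    (haxis : ∃ s ∈ segment ℝ q r, s.1 = 0 ∧ s.2.1 = 0) :
    segment ℝ q r = (fun x : ℝ => (x, r.2.1 / L * x, r.2.2)) '' Icc (-L) L := by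
  obtain ⟨s, hs, hs1, hs2⟩ := haxis
  rw [segment_eq_image'] at hs
  obtain ⟨θ, -, rfl⟩ := hs
  simp only [Prod.fst_add, Prod.snd_add, Prod.smul_fst, Prod.smul_snd, Prod.fst_sub,
    Prod.snd_sub, smul_eq_mul, hq, hr] at hs1 hs2
  have hθ : θ = 1 / 2 := by
    have : (2 * θ - 1) * L = 0 := by linarith
    have := (mul_eq_zero.1 this).resolve_right hL.ne'
    linarith
  subst hθ
  have hy : q.2.1 = -r.2.1 := by linarith
  have hz : q.2.2 = r.2.2 := by
    simp only [Hmul, Hinv, hq, hr, hy] at hhor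
    linarith
  let g : ℝ →ᵃ[ℝ] H := AffineMap.lineMap ((0 : ℝ), (0 : ℝ), r.2.2) ((1 : ℝ), r.2.1 / L, r.2.2)
  have hg : ∀ x, g x = (x, r.2.1 / L * x, r.2.2) := fun x => by
    simp only [g, AffineMap.lineMap_apply_module, Prod.smul_mk, Prod.mk_add_mk, smul_eq_mul]
    ext <;> simp only <;> ring
  have hgq : g (-L) = q := by
    rw [hg]; ext <;> simp [hq, hy, hz, hL.ne']
  have hgr : g L = r := by
    rw [hg]; ext <;> simp [hr, hL.ne']
  calc segment ℝ q r = g '' segment ℝ (-L) L := by rw [image_segment, hgq, hgr]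
    _ = _ := by rw [segment_eq_Icc (by linarith), image_congr' hg]

/-- `x ↦ (x, α̂(w) x, w + α̂(w) / 2)` is the ruling through the point of `Γ_f` above `(1, 0, w)`. -/
lemma ruling_mem_IGraph {ε : ℝ} (hε : 0 < ε) {f : H → ℝ} {D : Set H}
    (hD : ∀ w : ℝ, ((1 : ℝ), (0 : ℝ), w) ∈ D)
    (hruled : ∀ p ∈ IGraph D f, ∃ q r : H,
        q.1 = -(1 + ε) ∧ r.1 = 1 + ε ∧
        (Hmul (Hinv q) r).2.2 = 0 ∧
        segment ℝ q r ⊆ IGraph D f ∧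
        p ∈ segment ℝ q r ∧
        ∃ s ∈ segment ℝ q r, s.1 = 0 ∧ s.2.1 = 0)
    (w : ℝ) {x : ℝ} (hx : |x| ≤ 1 + ε) :
    (x, f (1, 0, w) * x, w + f (1, 0, w) / 2) ∈ IGraph D f := by
  set a := f (1, 0, w)
  have hProj : Proj (1, a, w + a / 2) = (1, 0, w) := by
    simp only [Proj, Prod.mk.injEq, true_and]; ring
  have hp : ((1 : ℝ), a, w + a / 2) ∈ IGraph D f :=
    mem_IGraph_iff.2 ⟨hProj ▸ hD w, by rw [hProj]⟩
  obtain ⟨q, r, hq, hr, hhor, hsub, hpqr, haxis⟩ := hruled _ hp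
  rw [segment_eq_image_of_horizontal (by linarith) hq hr hhor haxis] at hsub hpqr
  obtain ⟨y, -, hy⟩ := hpqr
  simp only [Prod.mk.injEq] at hy
  obtain ⟨rfl, hm, hc⟩ := hy
  rw [mul_one] at hm
  rw [← hc, ← hm]
  exact hsub ⟨x, abs_le.1 hx, rfl⟩

lemma bounds_of_forall_ne_zero {d e M : ℝ} (hd : 0 < d) (hM : 1 ≤ M)
    (h : ∀ u ∈ Ioc 0 M, d + e * (1 - u) ≠ 0) : -d ≤ e ∧ e * (M - 1) < d := by
  have root : e ≠ 0 → d + e * (1 - (1 + d / e)) = 0 := fun he => by field_simp; ring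
  constructor
  · by_contra! he
    refine h (1 + d / e) ⟨?_, ?_⟩ (root (by linarith))
    · rw [← sub_neg_eq_add, sub_pos, neg_lt, lt_div_iff_of_neg (by linarith)]; linarith
    · have : d / e < 0 := div_neg_of_pos_of_neg hd (by linarith)
      linarith
  · by_contra! he
    have he0 : 0 < e := by
      by_contra! he0
      nlinarith
    refine h (1 + d / e) ⟨by positivity, ?_⟩ (root he0.ne')
    rw [← le_sub_iff_add_le', div_le_iff₀ he0]
    linarith

theorem strip_boundary_lipschitz_general
    (ε : ℝ) (hε : 0 < ε) (f : H → ℝ)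
    (D : Set H) (hD : D = {p : H | p.2.1 = 0 ∧ |p.1| ≤ 1 + ε})
    (hruled : ∀ p ∈ IGraph D f, ∃ q r : H,
        q.1 = -(1 + ε) ∧ r.1 = 1 + ε ∧
        (Hmul (Hinv q) r).2.2 = 0 ∧
        segment ℝ q r ⊆ IGraph D f ∧
        p ∈ segment ℝ q r ∧
        ∃ s ∈ segment ℝ q r, s.1 = 0 ∧ s.2.1 = 0) :
    ∀ s t : ℝ, s < t →
      -2 * (t - s) ≤ f (1, 0, t) - f (1, 0, s) ∧
        f (1, 0, t) - f (1, 0, s) ≤ (ε + ε ^ 2 / 2)⁻¹ * (t - s) := by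
  intro s t hst
  have hD1 : ∀ w : ℝ, ((1 : ℝ), (0 : ℝ), w) ∈ D := fun w => by
    rw [hD]; exact ⟨rfl, by rw [abs_one]; linarith⟩
  set A := f (1, 0, s)
  set B := f (1, 0, t)
  -- the rulings through the points above `(1,0,s)` and `(1,0,t)` must not meet over `x = √u`
  have hne : ∀ u ∈ Ioc 0 ((1 + ε) ^ 2), (t - s) + (B - A) / 2 * (1 - u) ≠ 0 := by
    rintro u ⟨hu0, huM⟩ hcross
    have hx0 : 0 < √u := Real.sqrt_pos.2 hu0
    have hx : |√u| ≤ 1 + ε := by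
      rw [abs_of_pos hx0, ← Real.sqrt_sq (by linarith : 0 ≤ 1 + ε)]
      exact Real.sqrt_le_sqrt huM
    have hProj : Proj (√u, A * √u, s + A / 2) = Proj (√u, B * √u, t + B / 2) := by
      simp only [Proj, Prod.mk.injEq, true_and]
      linear_combination -hcross + (B - A) / 2 * Real.mul_self_sqrt hu0.le
    have heq := eq_of_mem_IGraph_of_Proj_eq (ruling_mem_IGraph hε hD1 hruled s hx)
      (ruling_mem_IGraph hε hD1 hruled t hx) hProj
    simp only [Prod.mk.injEq, true_and] at heq
    have hAB : A = B := mul_right_cancel₀ hx0.ne' heq.1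
    linarith [heq.2]
  obtain ⟨hlow, hup⟩ := bounds_of_forall_ne_zero (sub_pos.2 hst) (by nlinarith) hne
  have hk : 0 < ε + ε ^ 2 / 2 := by positivity
  refine ⟨by linarith, ?_⟩
  rw [← div_eq_inv_mul, le_div_iff₀ hk]
  nlinarith

/-- if `Γ_f` is a union of horizontal segments over the strip
`{|x| ≤ 1+ε}`, each going from `x = −(1+ε)` to `x = 1+ε` and meeting the
`z`-axis, then `α̂(w) = f(1,0,w)` satisfies
`−2(t − s) ≤ α̂(t) − α̂(s) ≤ (ε + ε²/2)⁻¹ (t − s)` for all `s < t`. -/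
theorem strip_boundary_lipschitz
    (ε : ℝ) (hε : 0 < ε) (f : H → ℝ)
    (D : Set H) (hD : D = {p : H | p.2.1 = 0 ∧ |p.1| ≤ 1 + ε})
    (hf : ContinuousOn f D)
    (hruled : ∀ p ∈ IGraph D f, ∃ q r : H,
        q.1 = -(1 + ε) ∧ r.1 = 1 + ε ∧
        (Hmul (Hinv q) r).2.2 = 0 ∧
        segment ℝ q r ⊆ IGraph D f ∧
        p ∈ segment ℝ q r ∧
        ∃ s ∈ segment ℝ q r, s.1 = 0 ∧ s.2.1 = 0) :
    ∀ s t : ℝ, s < t →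
      -2 * (t - s) ≤ f (1, 0, t) - f (1, 0, s) ∧
        f (1, 0, t) - f (1, 0, s) ≤ (ε + ε ^ 2 / 2)⁻¹ * (t - s) :=
  strip_boundary_lipschitz_general ε hε f D hD hruled
end
end

section
/- Let σ : ℝ → ℝ be a function such that |σ(z₂) − σ(z₁)| ≤ 2·(z₂ − z₁) for all z₁ < z₂. Let x₁, x₂ ∈ (−1, 1) and z₁ ≠ z₂, and set p = (x₁, x₁·σ(z₁), z₁) and q = (x₂, x₂·σ(z₂), z₂). Then the z-coordinate of p⁻¹·q is nonzero, i.e., z₂ − z₁ ≠ x₁·x₂·(σ(z₂) − σ(z₁))/2. In particular, p and q do not lie on a common horizontal line. -/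
open MeasureTheory Filter

noncomputable section

/-!
If `p⁻¹q` had vanishing `z`-coordinate, then `z₂ - z₁ = c (σ z₂ - σ z₁)` with `c = x₁x₂/2`.
Since `σ` is `2`-Lipschitz and `|c| · 2 = |x₁||x₂| < 1`, the right-hand side is strictly
smaller than `|z₂ - z₁|` in absolute value, which is impossible for `z₁ ≠ z₂`.
-/

open scoped NNReal

theorem Hmul_Hinv_snd_snd (p q : H) :
    (Hmul (Hinv p) q).2.2 = q.2.2 - p.2.2 - (p.1 * q.2.1 - p.2.1 * q.1) / 2 := by
  simp only [Hmul, Hinv]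
  ring

theorem lipschitzWith_of_forall_lt {f : ℝ → ℝ} {K : ℝ≥0}
    (hf : ∀ a b, a < b → |f b - f a| ≤ K * (b - a)) : LipschitzWith K f := by
  refine LipschitzWith.of_dist_le_mul fun x y => ?_
  simp only [Real.dist_eq]
  rcases lt_trichotomy x y with hxy | rfl | hyx
  · rw [abs_sub_comm, abs_sub_comm x, abs_of_pos (sub_pos.mpr hxy)]
    exact hf x y hxy
  · simp
  · rw [abs_of_pos (sub_pos.mpr hyx)]
    exact hf y x hyx

theorem LipschitzWith.sub_ne_mul_sub {f : ℝ → ℝ} {K : ℝ≥0} (hf : LipschitzWith K f)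
    {c : ℝ} (hc : |c| * K < 1) {x y : ℝ} (hxy : x ≠ y) : y - x ≠ c * (f y - f x) := by
  intro h
  have hpos : 0 < |y - x| := abs_pos.mpr (sub_ne_zero.mpr hxy.symm)
  have hlip : |f y - f x| ≤ K * |y - x| := by
    simpa only [Real.dist_eq] using hf.dist_le_mul y x
  have : |y - x| < |y - x| :=
    calc |y - x| = |c| * |f y - f x| := by rw [h, abs_mul]
      _ ≤ |c| * (K * |y - x|) := by gcongr
      _ = |c| * K * |y - x| := by ring
      _ < 1 * |y - x| := by gcongr
      _ = |y - x| := one_mul _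
  exact lt_irrefl _ this

/-- if `|σ(z₂) − σ(z₁)| ≤ 2(z₂ − z₁)` for all `z₁ < z₂`,
`x₁, x₂ ∈ (−1,1)` and `z₁ ≠ z₂`, then the `z`-coordinate of `p⁻¹q` is nonzero,
where `p = (x₁, x₁σ(z₁), z₁)` and `q = (x₂, x₂σ(z₂), z₂)`; equivalently
`z₂ − z₁ ≠ x₁x₂(σ(z₂) − σ(z₁))/2`.  In particular `p` and `q` do not lie on a
common horizontal line. -/
theorem no_common_horizontal_line
    (σ : ℝ → ℝ)
    (hσ : ∀ z₁ z₂ : ℝ, z₁ < z₂ → |σ z₂ - σ z₁| ≤ 2 * (z₂ - z₁))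
    (x₁ x₂ : ℝ) (hx₁ : x₁ ∈ Set.Ioo (-1 : ℝ) 1) (hx₂ : x₂ ∈ Set.Ioo (-1 : ℝ) 1)
    (z₁ z₂ : ℝ) (hz : z₁ ≠ z₂) :
    (Hmul (Hinv (x₁, x₁ * σ z₁, z₁)) (x₂, x₂ * σ z₂, z₂)).2.2 ≠ 0 ∧
      z₂ - z₁ ≠ x₁ * x₂ * (σ z₂ - σ z₁) / 2 := by
  have hσ_lip : LipschitzWith 2 σ := lipschitzWith_of_forall_lt (by exact_mod_cast hσ)
  have hc : |x₁ * x₂ / 2| * ((2 : ℝ≥0) : ℝ) < 1 := by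
    rw [abs_div, abs_mul, abs_two, NNReal.coe_ofNat, div_mul_cancel₀ _ two_ne_zero]
    exact mul_lt_one_of_nonneg_of_lt_one_left (abs_nonneg _) (abs_lt.mpr hx₁)
      (abs_lt.mpr hx₂).le
  have key : z₂ - z₁ ≠ x₁ * x₂ * (σ z₂ - σ z₁) / 2 := by
    rw [mul_div_right_comm]
    exact hσ_lip.sub_ne_mul_sub hc hz
  refine ⟨?_, key⟩
  convert sub_ne_zero.mpr key using 1
  rw [Hmul_Hinv_snd_snd]
  ring
end
end

section
/- Let ρ : ℝ → ℝ be a continuous, strictly increasing, surjective function, and let Σ_ρ = ⋃_{z∈ℝ} [(−1, 2z, z), (1, −2ρ(z), ρ(z))], where [p,q] denotes the closed Euclidean line segment in ℝ³ from p to q. Then the intrinsic projection Π restricted to Σ_ρ is a bijection from Σ_ρ onto K = {(x,0,z) : −1 ≤ x ≤ 1, z ∈ ℝ}; that is, Σ_ρ is an intrinsic graph over K. -/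
/-!
Parametrise `Σ_ρ` by `(t, z) ∈ [0, 1] × ℝ`, the point with parameter `t` on the `z`-th segment.
Its projection is `(2t − 1, 0, 2(1 − t)² z + 2t² ρ(z))`: the first coordinate determines `t`,
and for fixed `t` the last one is a combination of `id` and `ρ` with nonnegative weights that
do not both vanish, hence a strictly increasing surjection of `ℝ` (continuity is automatic for
monotone surjections, so the intermediate value theorem applies).
-/

open MeasureTheory Filter

noncomputable section

open Set Function

section Combination

variable {a b : ℝ}

lemma StrictMono.const_mul_add_const_mul {α : Type*} [PartialOrder α] {f g : α → ℝ}
    (hf : StrictMono f) (hg : StrictMono g) (ha : 0 ≤ a) (hb : 0 ≤ b) (hab : 0 < a + b) :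
    StrictMono fun x => a * f x + b * g x := by
  rcases ha.eq_or_lt with rfl | ha
  · simpa using hg.const_mul (by simpa using hab)
  · exact (hf.const_mul ha).add_monotone (hg.monotone.const_mul hb)

lemma Monotone.surjective_const_mul_add_const_mul {f g : ℝ → ℝ} (hf : Monotone f)
    (hf' : Surjective f) (hg : Monotone g) (hg' : Surjective g) (ha : 0 ≤ a) (hb : 0 ≤ b)
    (hab : 0 < a + b) :
    Surjective fun x => a * f x + b * g x := by
  have hmono : Monotone fun x => a * f x + b * g x := (hf.const_mul ha).add (hg.const_mul hb)
  have hcont : Continuous fun x => a * f x + b * g x :=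
    (continuous_const.mul (hf.continuous_of_surjective hf')).add
      (continuous_const.mul (hg.continuous_of_surjective hg'))
  have hsplit : ∀ c, a * (c / (a + b)) + b * (c / (a + b)) = c := fun c => by
    field_simp
  refine hcont.surjective (tendsto_atTop_atTop_of_monotone hmono fun c => ?_)
    (tendsto_atBot_atBot_of_monotone hmono fun c => ?_)
  · obtain ⟨x, hx⟩ := hf' (c / (a + b))
    obtain ⟨y, hy⟩ := hg' (c / (a + b))
    refine ⟨max x y, (hsplit c).symm.le.trans ?_⟩
    gcongr
    exacts [hx ▸ hf (le_max_left x y), hy ▸ hg (le_max_right x y)]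
  · obtain ⟨x, hx⟩ := hf' (c / (a + b))
    obtain ⟨y, hy⟩ := hg' (c / (a + b))
    refine ⟨min x y, le_of_le_of_eq ?_ (hsplit c)⟩
    gcongr
    exacts [hx ▸ hf (min_le_left x y), hy ▸ hg (min_le_right x y)]

end Combination

def rulingPoint (ρ : ℝ → ℝ) (p : ℝ × ℝ) : H :=
  (1 - p.1) • ((-1, 2 * p.2, p.2) : H) + p.1 • ((1, -2 * ρ p.2, ρ p.2) : H)

lemma iUnion_segment_eq_image_rulingPoint (ρ : ℝ → ℝ) :
    (⋃ z : ℝ, segment ℝ ((-1, 2 * z, z) : H) ((1, -2 * ρ z, ρ z) : H)) =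
      rulingPoint ρ '' Icc 0 1 ×ˢ univ := by
  ext q
  simp [segment_eq_image, rulingPoint, and_comm, exists_comm (α := ℝ)]

lemma proj_rulingPoint (ρ : ℝ → ℝ) (t z : ℝ) :
    Proj (rulingPoint ρ (t, z)) = (2 * t - 1, 0, 2 * (1 - t) ^ 2 * z + 2 * t ^ 2 * ρ z) := by
  simp only [rulingPoint, Proj, Prod.smul_mk, smul_eq_mul, Prod.mk_add_mk]
  ext <;> simp only <;> ring

lemma bijOn_proj_comp_rulingPoint (ρ : ℝ → ℝ) (hρmono : StrictMono ρ) (hρsurj : Surjective ρ) :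
    BijOn (Proj ∘ rulingPoint ρ) (Icc 0 1 ×ˢ univ) K := by
  have hweight : ∀ t : ℝ, 0 < 2 * (1 - t) ^ 2 + 2 * t ^ 2 := fun t => by
    nlinarith [sq_nonneg (2 * t - 1)]
  refine ⟨?_, ?_, ?_⟩
  · rintro ⟨t, z⟩ ⟨⟨ht0, ht1⟩, -⟩
    rw [comp_apply, proj_rulingPoint]
    exact ⟨rfl, by linarith, by linarith⟩
  · rintro ⟨t, z⟩ - ⟨s, w⟩ - h
    simp only [comp_apply, proj_rulingPoint, Prod.mk.injEq] at h
    obtain ⟨hts, -, hzw⟩ := h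
    obtain rfl : t = s := by linarith
    obtain rfl : z = w := (strictMono_id.const_mul_add_const_mul hρmono (by positivity)
      (by positivity) (hweight t)).injective hzw
    rfl
  · rintro ⟨x, y, c⟩ ⟨rfl, hx1, hx2⟩
    obtain ⟨z, hz⟩ := monotone_id.surjective_const_mul_add_const_mul surjective_id
      hρmono.monotone hρsurj (by positivity) (by positivity) (hweight ((x + 1) / 2)) c
    refine ⟨((x + 1) / 2, z), ⟨⟨by linarith, by linarith⟩, trivial⟩, ?_⟩
    rw [comp_apply, proj_rulingPoint, ← hz]
    ext <;> simp only [id_eq]; ring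

theorem sigma_rho_intrinsic_graph_general
    (ρ : ℝ → ℝ) (hρmono : StrictMono ρ)
    (hρsurj : Function.Surjective ρ) :
    Set.BijOn Proj
      (⋃ z : ℝ, segment ℝ ((-1, 2 * z, z) : H) ((1, -2 * ρ z, ρ z) : H)) K := by
  have h := bijOn_proj_comp_rulingPoint ρ hρmono hρsurj
  rwa [iUnion_segment_eq_image_rulingPoint, ← bijOn_comp_iff h.injOn.of_comp]

/-- for `ρ` continuous, strictly increasing and surjective, the
ruled surface `Σ_ρ = ⋃_z [(−1, 2z, z), (1, −2ρ(z), ρ(z))]` is an intrinsic graph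
over `K`: `Π` restricts to a bijection from `Σ_ρ` onto `K`. -/
theorem sigma_rho_intrinsic_graph
    (ρ : ℝ → ℝ) (hρc : Continuous ρ) (hρmono : StrictMono ρ)
    (hρsurj : Function.Surjective ρ) :
    Set.BijOn Proj
      (⋃ z : ℝ, segment ℝ ((-1, 2 * z, z) : H) ((1, -2 * ρ z, ρ z) : H)) K :=
  sigma_rho_intrinsic_graph_general ρ hρmono hρsurj
end
end

section
/- Let τ : ℝ → ℝ be C^∞ with compact support. Then there exists C > 0 such that for every w ∈ ℝ, every λ with |λ| < 1/C, and every ζ ∈ ℝ satisfying ζ − (λ/2)·τ(ζ) = w, one has |λ·τ(ζ) − λ·τ(w) − (λ²/2)·τ'(w)·τ(w)| ≤ C·|λ|³. -/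
open MeasureTheory Filter

noncomputable section

/-- uniform second-order Taylor expansion in `λ` of
`β_λ(w) = λ τ(ζ)` where `ζ − (λ/2)τ(ζ) = w`. -/
theorem beta_lambda_expansion
    (τ : ℝ → ℝ) (hτ : ContDiff ℝ (⊤ : ℕ∞) τ) (hτc : HasCompactSupport τ) :
    ∃ C : ℝ, 0 < C ∧ ∀ w lam ζ : ℝ, |lam| < 1 / C →
      ζ - lam / 2 * τ ζ = w →
      |lam * τ ζ - lam * τ w - lam ^ 2 / 2 * deriv τ w * τ w| ≤ C * |lam| ^ 3 := by
  have h1 : ContDiff ℝ ((⊤ : ℕ∞) : WithTop ℕ∞) τ := hτ.of_le (by simp)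
  have hd : Differentiable ℝ τ := hτ.differentiable (by simp)
  have h2 : ContDiff ℝ ((⊤ : ℕ∞) : WithTop ℕ∞) (deriv τ) :=
    (contDiff_infty_iff_deriv.mp h1).2
  have hd1 : Differentiable ℝ (deriv τ) :=
    h2.differentiable (by simp)
  have hc1 : HasCompactSupport (deriv τ) := hτc.deriv
  have hc2 : HasCompactSupport (deriv (deriv τ)) := hc1.deriv
  obtain ⟨M, hM⟩ := hτc.exists_bound_of_continuous hd.continuous
  obtain ⟨M1, hM1⟩ := hc1.exists_bound_of_continuous hd1.continuous
  obtain ⟨M2, hM2⟩ :=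
    hc2.exists_bound_of_continuous (h2.continuous_deriv (by exact_mod_cast le_top))
  simp only [Real.norm_eq_abs] at hM hM1 hM2
  have hM0 : 0 ≤ M := le_trans (abs_nonneg _) (hM 0)
  have hM10 : 0 ≤ M1 := le_trans (abs_nonneg _) (hM1 0)
  have hM20 : 0 ≤ M2 := le_trans (abs_nonneg _) (hM2 0)
  refine ⟨M1 ^ 2 * M / 4 + M2 * M ^ 2 / 4 + 1, by positivity, ?_⟩
  intro w lam ζ _ hzw
  have hzw' : ζ - w = lam / 2 * τ ζ := by linarith
  have hzwb : |ζ - w| ≤ |lam| / 2 * M := by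
    calc |ζ - w| = |lam| / 2 * |τ ζ| := by
          rw [hzw', abs_mul, abs_div, abs_two]
      _ ≤ |lam| / 2 * M := by
          apply mul_le_mul_of_nonneg_left (hM ζ) (by positivity)
  -- Lipschitz bound for τ
  have lip : |τ ζ - τ w| ≤ M1 * |ζ - w| := by
    have := Convex.norm_image_sub_le_of_norm_deriv_le
      (f := τ) (s := Set.univ) (fun x _ => hd x) (fun x _ => hM1 x)
      convex_univ (Set.mem_univ w) (Set.mem_univ ζ)
    simpa [Real.norm_eq_abs] using this
  -- second order Taylor bound via MVT on g x = τ x - deriv τ w * x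
  have taylor : |τ ζ - τ w - deriv τ w * (ζ - w)| ≤ M2 * |ζ - w| ^ 2 := by
    set g : ℝ → ℝ := fun x => τ x - deriv τ w * x with hg
    have hgd' : ∀ x, HasDerivAt g (deriv τ x - deriv τ w * 1) x := fun x =>
      (hd x).hasDerivAt.sub ((hasDerivAt_id x).const_mul (deriv τ w))
    have hgd : ∀ x, DifferentiableAt ℝ g x := fun x => (hgd' x).differentiableAt
    have hgderiv : ∀ x, deriv g x = deriv τ x - deriv τ w := by
      intro x
      have := (hgd' x).deriv
      simpa using this
    have lipd : ∀ x, |deriv τ x - deriv τ w| ≤ M2 * |x - w| := by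
      intro x
      have := Convex.norm_image_sub_le_of_norm_deriv_le
        (f := deriv τ) (s := Set.univ) (fun y _ => hd1 y) (fun y _ => hM2 y)
        convex_univ (Set.mem_univ w) (Set.mem_univ x)
      simpa [Real.norm_eq_abs] using this
    have key : |g ζ - g w| ≤ M2 * |ζ - w| * |ζ - w| := by
      have hseg : ∀ x ∈ segment ℝ w ζ, |x - w| ≤ |ζ - w| := by
        intro x hx
        obtain ⟨a, b, ha, hb, hab, rfl⟩ := hx
        have heq : a • w + b • ζ - w = b * (ζ - w) := by
          have : a = 1 - b := by linarith
          subst this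
          simp only [smul_eq_mul]
          ring
        rw [heq, abs_mul]
        calc |b| * |ζ - w| ≤ 1 * |ζ - w| := by
              apply mul_le_mul_of_nonneg_right _ (abs_nonneg _)
              rw [abs_of_nonneg hb]; linarith
          _ = |ζ - w| := one_mul _
      have := Convex.norm_image_sub_le_of_norm_deriv_le
        (f := g) (s := segment ℝ w ζ) (fun x _ => hgd x)
        (fun x hx => by
          rw [Real.norm_eq_abs, hgderiv x]
          calc |deriv τ x - deriv τ w| ≤ M2 * |x - w| := lipd x
            _ ≤ M2 * |ζ - w| := mul_le_mul_of_nonneg_left (hseg x hx) hM20)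
        (convex_segment _ _) (left_mem_segment ℝ w ζ) (right_mem_segment ℝ w ζ)
      simpa [Real.norm_eq_abs] using this
    have heq2 : g ζ - g w = τ ζ - τ w - deriv τ w * (ζ - w) := by rw [hg]; ring
    rw [heq2] at key
    calc |τ ζ - τ w - deriv τ w * (ζ - w)| ≤ M2 * |ζ - w| * |ζ - w| := key
      _ = M2 * |ζ - w| ^ 2 := by ring
  -- combine
  have decomp : lam * τ ζ - lam * τ w - lam ^ 2 / 2 * deriv τ w * τ w
      = lam ^ 2 / 2 * deriv τ w * (τ ζ - τ w)
        + lam * (τ ζ - τ w - deriv τ w * (ζ - w)) := by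
    rw [hzw']; ring
  rw [decomp]
  have hb : |τ ζ - τ w| ≤ M1 * (|lam| / 2 * M) :=
    le_trans lip (mul_le_mul_of_nonneg_left hzwb hM10)
  have e1 : |lam ^ 2 / 2 * deriv τ w * (τ ζ - τ w)|
      ≤ |lam| ^ 2 / 2 * M1 * (M1 * (|lam| / 2 * M)) := by
    rw [abs_mul, abs_mul]
    have hsq : |lam ^ 2 / 2| = |lam| ^ 2 / 2 := by
      rw [abs_div, sq_abs]; norm_num
    rw [hsq]
    exact mul_le_mul (mul_le_mul_of_nonneg_left (hM1 w) (by positivity)) hb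
      (abs_nonneg _) (by positivity)
  have e2 : |lam * (τ ζ - τ w - deriv τ w * (ζ - w))|
      ≤ |lam| * (M2 * (|lam| / 2 * M) ^ 2) := by
    rw [abs_mul]
    refine mul_le_mul_of_nonneg_left ?_ (abs_nonneg lam)
    refine le_trans taylor (mul_le_mul_of_nonneg_left ?_ hM20)
    exact pow_le_pow_left₀ (abs_nonneg _) hzwb 2
  calc |lam ^ 2 / 2 * deriv τ w * (τ ζ - τ w)
        + lam * (τ ζ - τ w - deriv τ w * (ζ - w))|
      ≤ |lam ^ 2 / 2 * deriv τ w * (τ ζ - τ w)|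
        + |lam * (τ ζ - τ w - deriv τ w * (ζ - w))| := abs_add_le _ _
    _ ≤ |lam| ^ 2 / 2 * M1 * (M1 * (|lam| / 2 * M))
        + |lam| * (M2 * (|lam| / 2 * M) ^ 2) := add_le_add e1 e2
    _ = (M1 ^ 2 * M / 4 + M2 * M ^ 2 / 4) * |lam| ^ 3 := by ring
    _ ≤ (M1 ^ 2 * M / 4 + M2 * M ^ 2 / 4 + 1) * |lam| ^ 3 := by
        have h3 : 0 ≤ |lam| ^ 3 := by positivity
        exact mul_le_mul_of_nonneg_right (by linarith) h3
end
end

section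
/- Let ρ : ℝ → ℝ be Lipschitz and nondecreasing, with a.e. derivative ρ', and let a < b. Then ∫_a^b √(1 + (z + ρ(z))²)·(∫_{−1}^{1} ((x−1)²/2 + ρ'(z)·(x+1)²/2) dx) dz = (4/3)·∫_a^b √(1 + (z + ρ(z))²)·(1 + ρ'(z)) dz = (4/3)·∫_{a+ρ(a)}^{b+ρ(b)} √(1 + m²) dm. In particular, this quantity depends only on a + ρ(a) and b + ρ(b). -/
/-!
Integrating the inner polynomial gives `(4/3)(1 + ρ'(z))`, and `1 + ρ'` is the a.e. derivative of
the Lipschitz map `g z = z + ρ z`. The second identity is then the substitution `m = g z`, which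
holds for any Lipschitz `g` because, for a `C¹` primitive `F` of the integrand, `F ∘ g` is
Lipschitz, hence absolutely continuous, so the fundamental theorem of calculus applies to it.
-/

open MeasureTheory Set intervalIntegral
open scoped NNReal Interval

theorem integral_neg_one_one_half_sq_sub_one_add_mul_half_sq_add_one (c : ℝ) :
    ∫ x in (-1 : ℝ)..1, ((x - 1) ^ 2 / 2 + c * (x + 1) ^ 2 / 2) = 4 / 3 * (1 + c) := by
  rw [intervalIntegral.integral_add (Continuous.intervalIntegrable (by fun_prop) _ _)
    (Continuous.intervalIntegrable (by fun_prop) _ _)]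
  simp only [intervalIntegral.integral_div, intervalIntegral.integral_const_mul, mul_div_assoc,
    integral_comp_sub_right (fun x => x ^ 2), integral_comp_add_right (fun x => x ^ 2),
    integral_pow]
  norm_num
  ring

theorem LipschitzOnWith.integral_comp_mul_deriv {f g g' : ℝ → ℝ} {K : ℝ≥0} {a b : ℝ}
    (hg : LipschitzOnWith K g [[a, b]]) (hg' : ∀ᵐ z, z ∈ Ι a b → HasDerivAt g (g' z) z)
    (hf : Continuous f) :
    ∫ z in a..b, f (g z) * g' z = ∫ m in g a..g b, f m := by
  set F : ℝ → ℝ := fun u => ∫ t in 0..u, f t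
  have hF : ∀ u, HasDerivAt F (f u) u := fun u => (hf.integral_hasStrictDerivAt 0 u).hasDerivAt
  have hF_C1 : ContDiff ℝ 1 F := contDiff_one_iff_deriv.2
    ⟨fun u => (hF u).differentiableAt, by rwa [funext fun u => (hF u).deriv]⟩
  obtain ⟨L, hL⟩ := hF_C1.locallyLipschitz.locallyLipschitzOn.exists_lipschitzOnWith_of_compact
    (isCompact_uIcc.image_of_continuousOn hg.continuousOn)
  have hFg : AbsolutelyContinuousOnInterval (F ∘ g) a b :=
    (hL.comp hg (mapsTo_image _ _)).absolutelyContinuousOnInterval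
  calc ∫ z in a..b, f (g z) * g' z = ∫ z in a..b, deriv (F ∘ g) z :=
        integral_congr_ae (by
          filter_upwards [hg'] with z hz hzab using ((hF (g z)).comp z (hz hzab)).deriv.symm)
    _ = F (g b) - F (g a) := hFg.integral_deriv_eq_sub
    _ = ∫ m in g a..g b, f m :=
        integral_interval_sub_left (hf.intervalIntegrable _ _) (hf.intervalIntegrable _ _)

theorem sigma_rho_area_general
    (ρ ρ' : ℝ → ℝ) (Kρ : NNReal) (hρLip : LipschitzWith Kρ ρ)
    (hρ' : ∀ᵐ z : ℝ ∂volume, HasDerivAt ρ (ρ' z) z)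
    (a b : ℝ) :
    (∫ z in a..b, Real.sqrt (1 + (z + ρ z) ^ 2) *
          (∫ x in (-1 : ℝ)..1, ((x - 1) ^ 2 / 2 + ρ' z * (x + 1) ^ 2 / 2)))
        = (4 / 3) * ∫ z in a..b, Real.sqrt (1 + (z + ρ z) ^ 2) * (1 + ρ' z)
      ∧ (4 / 3) * (∫ z in a..b, Real.sqrt (1 + (z + ρ z) ^ 2) * (1 + ρ' z))
        = (4 / 3) * ∫ m in (a + ρ a)..(b + ρ b), Real.sqrt (1 + m ^ 2) := by
  refine ⟨?_, ?_⟩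
  · simp_rw [integral_neg_one_one_half_sq_sub_one_add_mul_half_sq_add_one,
      mul_left_comm _ (4 / 3 : ℝ)]
    exact intervalIntegral.integral_const_mul _ _
  · have hg : LipschitzOnWith (1 + Kρ) (fun z => z + ρ z) [[a, b]] :=
      (LipschitzWith.id.add hρLip).lipschitzOnWith
    have hg' : ∀ᵐ z, z ∈ Ι a b → HasDerivAt (fun z => z + ρ z) (1 + ρ' z) z := by
      filter_upwards [hρ'] with z hz _ using (hasDerivAt_id z).add hz
    have hf : Continuous fun m : ℝ => Real.sqrt (1 + m ^ 2) := by fun_prop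
    rw [hg.integral_comp_mul_deriv hg' hf]

/-- the area of the portion of `Σ_ρ` over `a ≤ z ≤ b`:
`∫_a^b √(1+(z+ρ(z))²) (∫_{−1}^1 ((x−1)²/2 + ρ'(z)(x+1)²/2) dx) dz
  = (4/3) ∫_a^b √(1+(z+ρ(z))²)(1+ρ'(z)) dz
  = (4/3) ∫_{a+ρ(a)}^{b+ρ(b)} √(1+m²) dm`. -/
theorem sigma_rho_area
    (ρ ρ' : ℝ → ℝ) (Kρ : NNReal) (hρLip : LipschitzWith Kρ ρ) (hρmono : Monotone ρ)
    (hρ' : ∀ᵐ z : ℝ ∂volume, HasDerivAt ρ (ρ' z) z) (hρ'm : Measurable ρ')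
    (a b : ℝ) (hab : a < b) :
    (∫ z in a..b, Real.sqrt (1 + (z + ρ z) ^ 2) *
          (∫ x in (-1 : ℝ)..1, ((x - 1) ^ 2 / 2 + ρ' z * (x + 1) ^ 2 / 2)))
        = (4 / 3) * ∫ z in a..b, Real.sqrt (1 + (z + ρ z) ^ 2) * (1 + ρ' z)
      ∧ (4 / 3) * (∫ z in a..b, Real.sqrt (1 + (z + ρ z) ^ 2) * (1 + ρ' z))
        = (4 / 3) * ∫ m in (a + ρ a)..(b + ρ b), Real.sqrt (1 + m ^ 2) :=
  sigma_rho_area_general ρ ρ' Kρ hρLip hρ' a b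
end
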